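/- arXiv:1805.01679 — 10 statements merged into one kernel-verified Lean document; each statement's English description precedes it below -/
import Mathlib

section
/- Let z = a + b·i with a ∈ ℝ and b > 0, and let x ∈ ℝ. Then the function t ↦ log|x − t| · (1/π)·b/((t − a)² + b²) is Lebesgue integrable on ℝ, and ∫_ℝ log|x − t| · (1/π)·b/((t − a)² + b²) dt = log|x − z|. (Equivalently: the balayage of the unit point mass δ_z onto ℝ is the measure with density (1/π)|Im z|/|x − z|² with respect to Lebesgue measure, and its logarithmic potential agrees with that of δ_z on ℝ.) -/
/-!
Substituting `t = a + b tan θ` turns the density `b / ((t - a)² + b²) dt` into `dθ` on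
`(-π/2, π/2)`. Writing `w = x - z = ‖w‖ e^{iφ}` one has
`x - a - b tan θ = ‖w‖ cos (θ - φ) / cos θ`, so almost everywhere
`log |x - t| = log ‖w‖ + log |cos (θ - φ)| - log |cos θ|`. The last two terms have the same
integral over `(-π/2, π/2)` because `log |cos|` is `π`-periodic, which leaves `π log ‖w‖`.
-/

open MeasureTheory Real Set

section TanSubstitution

variable {E : Type*} [NormedAddCommGroup E] [NormedSpace ℝ E] {a b : ℝ}

lemma injOn_const_add_mul_tan (hb : b ≠ 0) :
    InjOn (fun θ => a + b * tan θ) (Ioo (-(π / 2)) (π / 2)) :=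
  fun _ hp _ hq h => strictMonoOn_tan.injOn hp hq (mul_left_cancel₀ hb (add_left_cancel h))

lemma image_const_add_mul_tan (hb : b ≠ 0) :
    (fun θ => a + b * tan θ) '' Ioo (-(π / 2)) (π / 2) = univ := by
  refine eq_univ_of_forall fun t => ⟨arctan ((t - a) / b), arctan_mem_Ioo _, ?_⟩
  simp only [tan_arctan]
  field_simp
  ring

lemma hasDerivAt_const_add_mul_tan {θ : ℝ} (hθ : cos θ ≠ 0) :
    HasDerivAt (fun θ => a + b * tan θ) (b / cos θ ^ 2) θ := by
  rw [div_eq_mul_one_div]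
  exact ((hasDerivAt_tan hθ).const_mul b).const_add a

lemma abs_div_cos_sq_smul_poisson_smul (hb : 0 < b) (f : ℝ → E) {θ : ℝ}
    (hθ : θ ∈ Ioo (-(π / 2)) (π / 2)) :
    |b / cos θ ^ 2| • ((b / ((a + b * tan θ - a) ^ 2 + b ^ 2)) • f (a + b * tan θ)) =
      f (a + b * tan θ) := by
  have hcos : 0 < cos θ := cos_pos_of_mem_Ioo hθ
  have hden : (a + b * tan θ - a) ^ 2 + b ^ 2 = b ^ 2 / cos θ ^ 2 := by
    rw [tan_eq_sin_div_cos]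
    field_simp
    linear_combination b ^ 2 * sin_sq_add_cos_sq θ
  rw [smul_smul, abs_of_pos (by positivity), hden]
  field_simp
  exact one_smul ℝ _

theorem integrable_poisson_smul_iff (hb : 0 < b) {f : ℝ → E} :
    Integrable (fun t => (b / ((t - a) ^ 2 + b ^ 2)) • f t) ↔
      IntervalIntegrable (fun θ => f (a + b * tan θ)) volume (-(π / 2)) (π / 2) := by
  rw [intervalIntegrable_iff_integrableOn_Ioo_of_le (by linarith [pi_pos]),
    ← integrableOn_univ, ← image_const_add_mul_tan (a := a) hb.ne',
    integrableOn_image_iff_integrableOn_abs_deriv_smul measurableSet_Ioo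
      (fun θ hθ => (hasDerivAt_const_add_mul_tan (cos_pos_of_mem_Ioo hθ).ne').hasDerivWithinAt)
      (injOn_const_add_mul_tan hb.ne')]
  exact integrableOn_congr_fun (fun θ hθ => abs_div_cos_sq_smul_poisson_smul hb f hθ)
    measurableSet_Ioo

theorem integral_poisson_smul (hb : 0 < b) (f : ℝ → E) :
    ∫ t, (b / ((t - a) ^ 2 + b ^ 2)) • f t = ∫ θ in -(π / 2)..π / 2, f (a + b * tan θ) := by
  rw [intervalIntegral.integral_of_le (by linarith [pi_pos]), integral_Ioc_eq_integral_Ioo,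
    ← setIntegral_univ, ← image_const_add_mul_tan (a := a) hb.ne',
    integral_image_eq_integral_abs_deriv_smul measurableSet_Ioo
      (fun θ hθ => (hasDerivAt_const_add_mul_tan (cos_pos_of_mem_Ioo hθ).ne').hasDerivWithinAt)
      (injOn_const_add_mul_tan hb.ne')]
  exact setIntegral_congr_fun measurableSet_Ioo
    fun θ hθ => abs_div_cos_sq_smul_poisson_smul hb f hθ

end TanSubstitution

lemma norm_mul_cos_sub_arg (w : ℂ) (θ : ℝ) :
    ‖w‖ * cos (θ - w.arg) = w.re * cos θ + w.im * sin θ := by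
  rcases eq_or_ne w 0 with rfl | hw
  · simp
  rw [cos_sub, Complex.cos_arg hw, Complex.sin_arg]
  field_simp [norm_ne_zero_iff.mpr hw]

lemma log_abs_re_add_im_mul_tan (w : ℂ) {θ : ℝ} (hθ : cos θ ≠ 0)
    (hθw : cos (θ - w.arg) ≠ 0) :
    log |w.re + w.im * tan θ| = log ‖w‖ + log (cos (θ - w.arg)) - log (cos θ) := by
  rcases eq_or_ne w 0 with rfl | hw
  · simp
  have h : w.re + w.im * tan θ = ‖w‖ * cos (θ - w.arg) / cos θ := by
    rw [norm_mul_cos_sub_arg, tan_eq_sin_div_cos]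
    field_simp
  rw [h, log_abs, log_div (mul_ne_zero (norm_ne_zero_iff.mpr hw) hθw) hθ,
    log_mul (norm_ne_zero_iff.mpr hw) hθw]

lemma ae_cos_sub_ne_zero (φ : ℝ) : ∀ᵐ θ : ℝ, cos (θ - φ) ≠ 0 := by
  filter_upwards [(countable_range fun k : ℤ => (2 * k + 1) * π / 2 + φ).ae_notMem volume]
    with θ hθ hzero
  obtain ⟨k, hk⟩ := cos_eq_zero_iff.mp hzero
  exact hθ ⟨k, by linarith⟩

lemma log_abs_re_add_im_mul_tan_ae_eq (w : ℂ) :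
    (fun θ => log |w.re + w.im * tan θ|) =ᵐ[volume]
      fun θ => log ‖w‖ + log (cos (θ - w.arg)) - log (cos θ) := by
  filter_upwards [ae_cos_sub_ne_zero 0, ae_cos_sub_ne_zero w.arg] with θ hθ hθw
  exact log_abs_re_add_im_mul_tan w (by simpa using hθ) hθw

lemma integral_log_cos_sub (φ c : ℝ) :
    ∫ θ in c..c + π, log (cos (θ - φ)) = ∫ θ in c..c + π, log (cos θ) := by
  have hper : Function.Periodic (fun θ => log (cos θ)) π := fun θ => by
    simp only [cos_add_pi, log_neg_eq_log]
  rw [intervalIntegral.integral_comp_sub_right (fun θ => log (cos θ)),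
    show c + π - φ = c - φ + π by ring, hper.intervalIntegral_add_eq (c - φ) c]

lemma intervalIntegrable_log_cos_sub (φ c d : ℝ) :
    IntervalIntegrable (fun θ => log (cos (θ - φ))) volume c d := by
  simpa using (intervalIntegrable_log_cos (a := c - φ) (b := d - φ)).comp_sub_right φ

theorem intervalIntegrable_log_abs_re_add_im_mul_tan (w : ℂ) (c d : ℝ) :
    IntervalIntegrable (fun θ => log |w.re + w.im * tan θ|) volume c d := by
  refine IntervalIntegrable.congr_ae ?_
    (ae_restrict_of_ae (log_abs_re_add_im_mul_tan_ae_eq w).symm)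
  exact (intervalIntegrable_const.add (intervalIntegrable_log_cos_sub w.arg c d)).sub
    intervalIntegrable_log_cos

theorem integral_log_abs_re_add_im_mul_tan (w : ℂ) :
    ∫ θ in -(π / 2)..π / 2, log |w.re + w.im * tan θ| = π * log ‖w‖ := by
  have hcancel := integral_log_cos_sub w.arg (-(π / 2))
  rw [show -(π / 2) + π = π / 2 by ring] at hcancel
  rw [intervalIntegral.integral_congr_ae
      ((log_abs_re_add_im_mul_tan_ae_eq w).mono fun _ h _ => h),
    intervalIntegral.integral_sub (g := fun θ => log (cos θ))
      (intervalIntegrable_const.add (intervalIntegrable_log_cos_sub w.arg _ _))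
      intervalIntegrable_log_cos,
    intervalIntegral.integral_add intervalIntegrable_const
      (intervalIntegrable_log_cos_sub w.arg _ _),
    hcancel, intervalIntegral.integral_const, smul_eq_mul]
  ring

/-- **Balayage of a point mass onto the real axis.**
For `z = a + b i` with `b > 0` and `x ∈ ℝ`, the function
`t ↦ log |x − t| · (1/π) · b / ((t − a)² + b²)` is Lebesgue integrable on `ℝ` and its
integral equals `log |x − z|`; i.e. the balayage of `δ_z` onto `ℝ` is the measure with
density `(1/π)|Im z|/|x − z|²`, and its logarithmic potential agrees with that of `δ_z`
on `ℝ`. -/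
theorem balayage_point_mass_real_axis
    (a b : ℝ) (hb : 0 < b) (z : ℂ) (hz : z = (a : ℂ) + (b : ℂ) * Complex.I) (x : ℝ) :
    Integrable (fun t : ℝ =>
      Real.log |x - t| * ((1 / π) * b / ((t - a) ^ 2 + b ^ 2))) ∧
    (∫ t : ℝ, Real.log |x - t| * ((1 / π) * b / ((t - a) ^ 2 + b ^ 2)))
      = Real.log ‖(x : ℂ) - z‖ := by
  subst hz
  set w : ℂ := x - (a + b * Complex.I)
  have hlog : (fun θ => log |x - (a + b * tan θ)|) = fun θ => log |w.re + w.im * tan θ| := by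
    ext θ
    simp only [w, Complex.sub_re, Complex.sub_im, Complex.add_re, Complex.add_im,
      Complex.ofReal_re, Complex.ofReal_im, Complex.mul_re, Complex.mul_im, Complex.I_re,
      Complex.I_im]
    ring_nf
  have hdensity : (fun t : ℝ => log |x - t| * ((1 / π) * b / ((t - a) ^ 2 + b ^ 2))) =
      fun t => π⁻¹ * ((b / ((t - a) ^ 2 + b ^ 2)) • log |x - t|) := by
    ext t
    rw [smul_eq_mul]
    ring
  rw [hdensity]
  refine ⟨((integrable_poisson_smul_iff hb).2 ?_).const_mul _, ?_⟩
  · rw [hlog]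
    exact intervalIntegrable_log_abs_re_add_im_mul_tan w _ _
  · rw [integral_const_mul, integral_poisson_smul hb, hlog, integral_log_abs_re_add_im_mul_tan]
    field_simp
end

section
/- Let β₁, β₂ > 0, z₁ = −1 + β₁·i, z₂ = 1 + β₂·i, and for γ ∈ (0,1) let Q_γ(x) = log|x − z₁| − γ log|x − z₂| for x ∈ ℝ. Then there exists Γ₀ ∈ (0,1) such that for every γ ∈ (Γ₀, 1), the function Q_γ has two local minima on ℝ: one local minimum point lies in (−∞, −1) and the other lies in (1, +∞). Moreover, Q_γ is strictly increasing on [−1, 1]. -/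
/-!
For `γ < 1` we have `Q_γ(x) ≥ (1 - γ) log |x - z₁| - log 2` once `|x|` is large, so `Q_γ → +∞`
at `±∞`. The derivative is `Q_γ'(x) = (x + 1)/|x - z₁|² - γ (x - 1)/|x - z₂|²`; both terms are
positive on `(-1, 1)`, and `Q_γ'(-1) > 0`, so `Q_γ` dips below `Q_γ(-1)` just left of `-1` and its
minimum over `(-∞, -1]` is an interior local minimum. For a point `x₀ > 1` at which
`(x₀ + 1)/|x₀ - z₁|² < (x₀ - 1)/|x₀ - z₂|²`, the ratio of these two numbers is a valid `Γ₀`: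
for `γ > Γ₀` we get `Q_γ'(x₀) < 0`, and the minimum over `[x₀, ∞)` is a local minimum.
-/

open Filter Real Set

theorem HasDerivAt.nonneg_of_isMinOn_Ici {f : ℝ → ℝ} {a d : ℝ} (hd : HasDerivAt f d a)
    (hmin : IsMinOn f (Ici a) a) : 0 ≤ d :=
  ge_of_tendsto (hasDerivAt_iff_tendsto_slope_left_right.1 hd).2 <|
    eventually_nhdsWithin_of_forall fun y (hy : a < y) => by
      rw [slope_def_field]
      exact div_nonneg (sub_nonneg.2 (hmin hy.le)) (sub_nonneg.2 hy.le)

theorem HasDerivAt.nonpos_of_isMinOn_Iic {f : ℝ → ℝ} {b d : ℝ} (hd : HasDerivAt f d b)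
    (hmin : IsMinOn f (Iic b) b) : d ≤ 0 :=
  le_of_tendsto (hasDerivAt_iff_tendsto_slope_left_right.1 hd).1 <|
    eventually_nhdsWithin_of_forall fun y (hy : y < b) => by
      rw [slope_def_field]
      exact div_nonpos_of_nonneg_of_nonpos (sub_nonneg.2 (hmin hy.le)) (sub_nonpos.2 hy.le)

section LocalMin

variable {f : ℝ → ℝ} {a d : ℝ}

theorem exists_isLocalMin_mem_Ioi_of_hasDerivAt_neg (hf : Continuous f)
    (hlim : Tendsto f (cocompact ℝ) atTop) (hd : HasDerivAt f d a) (hd₀ : d < 0) :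
    ∃ m ∈ Ioi a, IsLocalMin f m := by
  obtain ⟨m, ham : a ≤ m, hmin⟩ := hf.continuousOn.exists_isMinOn' isClosed_Ici self_mem_Ici
    ((hlim.eventually_ge_atTop (f a)).filter_mono inf_le_left)
  rcases ham.eq_or_lt with rfl | ham
  · exact absurd (hd.nonneg_of_isMinOn_Ici hmin) hd₀.not_ge
  · exact ⟨m, ham, hmin.isLocalMin (Ici_mem_nhds ham)⟩

theorem exists_isLocalMin_mem_Iio_of_hasDerivAt_pos (hf : Continuous f)
    (hlim : Tendsto f (cocompact ℝ) atTop) (hd : HasDerivAt f d a) (hd₀ : 0 < d) :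
    ∃ m ∈ Iio a, IsLocalMin f m := by
  obtain ⟨m, hma : m ≤ a, hmin⟩ := hf.continuousOn.exists_isMinOn' isClosed_Iic self_mem_Iic
    ((hlim.eventually_ge_atTop (f a)).filter_mono inf_le_left)
  rcases hma.eq_or_lt with rfl | hma
  · exact absurd (hd.nonpos_of_isMinOn_Iic hmin) hd₀.not_ge
  · exact ⟨m, hma, hmin.isLocalMin (Iic_mem_nhds hma)⟩

end LocalMin

theorem log_norm_sub_le_log_two_add_log_norm_sub {E : Type*} [SeminormedAddCommGroup E]
    {a b x : E} (h₁ : 1 ≤ ‖x - a‖) (hab : ‖a - b‖ ≤ ‖x - a‖) :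
    log ‖x - b‖ ≤ log 2 + log ‖x - a‖ := by
  rw [← log_mul two_ne_zero (zero_lt_one.trans_le h₁).ne']
  rcases (norm_nonneg (x - b)).eq_or_lt with h | h
  · rw [← h, log_zero]
    exact log_nonneg (by linarith)
  · exact log_le_log h (by linarith [norm_sub_le_norm_sub_add_norm_sub x a b])

theorem tendsto_log_norm_sub_sub_mul_log_norm_sub_cocompact {E : Type*} [NormedAddCommGroup E]
    [ProperSpace E] (a b : E) {γ : ℝ} (hγ₀ : 0 ≤ γ) (hγ₁ : γ < 1) :
    Tendsto (fun x => log ‖x - a‖ - γ * log ‖x - b‖) (cocompact E) atTop := by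
  have hdist : Tendsto (fun x => ‖x - a‖) (cocompact E) atTop := by
    simpa only [dist_eq_norm] using tendsto_dist_right_cocompact_atTop a
  have hlower : Tendsto (fun x => (1 - γ) * log ‖x - a‖ - γ * log 2) (cocompact E) atTop :=
    tendsto_atTop_add_const_right _ _
      ((tendsto_log_atTop.comp hdist).const_mul_atTop (sub_pos.2 hγ₁))
  refine tendsto_atTop_mono' _ ?_ hlower
  filter_upwards [hdist.eventually_ge_atTop 1, hdist.eventually_ge_atTop ‖a - b‖] with x h₁ hab
  have := mul_le_mul_of_nonneg_left (log_norm_sub_le_log_two_add_log_norm_sub h₁ hab) hγ₀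
  linarith

noncomputable def logDistDeriv (z : ℂ) (x : ℝ) : ℝ := (x - z.re) / ((x - z.re) ^ 2 + z.im ^ 2)

theorem log_norm_ofReal_sub (z : ℂ) (x : ℝ) :
    log ‖(x : ℂ) - z‖ = log ((x - z.re) ^ 2 + z.im ^ 2) / 2 := by
  rw [Complex.norm_def, log_sqrt (Complex.normSq_nonneg _), Complex.normSq_apply]
  simp only [Complex.sub_re, Complex.sub_im, Complex.ofReal_re, Complex.ofReal_im]
  ring_nf

theorem hasDerivAt_log_norm_ofReal_sub {z : ℂ} (hz : z.im ≠ 0) (x : ℝ) :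
    HasDerivAt (fun t : ℝ => log ‖(t : ℂ) - z‖) (logDistDeriv z x) x := by
  have hpos : 0 < (x - z.re) ^ 2 + z.im ^ 2 :=
    add_pos_of_nonneg_of_pos (sq_nonneg _) (pow_two_pos_of_ne_zero hz)
  simp_rw [log_norm_ofReal_sub]
  have h := ((((hasDerivAt_id' x).sub_const z.re).fun_pow 2).add_const (z.im ^ 2)).log hpos.ne'
  refine (h.div_const 2).congr_deriv ?_
  rw [logDistDeriv]
  field_simp
  ring

theorem logDistDeriv_pos {z : ℂ} {x : ℝ} (h : z.re < x) : 0 < logDistDeriv z x :=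
  div_pos (sub_pos.2 h)
    (add_pos_of_pos_of_nonneg (pow_two_pos_of_ne_zero (sub_ne_zero.2 h.ne')) (sq_nonneg _))

theorem logDistDeriv_neg {z : ℂ} {x : ℝ} (h : x < z.re) : logDistDeriv z x < 0 :=
  div_neg_of_neg_of_pos (sub_neg.2 h)
    (add_pos_of_pos_of_nonneg (pow_two_pos_of_ne_zero (sub_ne_zero.2 h.ne)) (sq_nonneg _))

noncomputable def externalField (z₁ z₂ : ℂ) (γ x : ℝ) : ℝ :=
  log ‖(x : ℂ) - z₁‖ - γ * log ‖(x : ℂ) - z₂‖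

section ExternalField

variable {z₁ z₂ : ℂ} {γ : ℝ}

theorem hasDerivAt_externalField (h₁ : z₁.im ≠ 0) (h₂ : z₂.im ≠ 0) (x : ℝ) :
    HasDerivAt (externalField z₁ z₂ γ) (logDistDeriv z₁ x - γ * logDistDeriv z₂ x) x :=
  (hasDerivAt_log_norm_ofReal_sub h₁ x).sub
    ((hasDerivAt_log_norm_ofReal_sub h₂ x).const_mul γ)

theorem continuous_externalField (h₁ : z₁.im ≠ 0) (h₂ : z₂.im ≠ 0) :
    Continuous (externalField z₁ z₂ γ) :=
  continuous_iff_continuousAt.2 fun x =>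
    (hasDerivAt_externalField h₁ h₂ x).continuousAt

theorem tendsto_externalField_cocompact (hγ₀ : 0 ≤ γ) (hγ₁ : γ < 1) :
    Tendsto (externalField z₁ z₂ γ) (cocompact ℝ) atTop :=
  (tendsto_log_norm_sub_sub_mul_log_norm_sub_cocompact z₁ z₂ hγ₀ hγ₁).comp
    Complex.isometry_ofReal.isClosedEmbedding.tendsto_cocompact

theorem strictMonoOn_externalField (h₁ : z₁.im ≠ 0) (h₂ : z₂.im ≠ 0) (hγ : 0 ≤ γ) :
    StrictMonoOn (externalField z₁ z₂ γ) (Icc z₁.re z₂.re) := by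
  refine strictMonoOn_of_deriv_pos (convex_Icc _ _)
    (continuous_externalField h₁ h₂).continuousOn fun x hx => ?_
  rw [interior_Icc] at hx
  rw [(hasDerivAt_externalField h₁ h₂ x).deriv, sub_pos]
  exact (mul_nonpos_of_nonneg_of_nonpos hγ (logDistDeriv_neg hx.2).le).trans_lt
    (logDistDeriv_pos hx.1)

theorem exists_isLocalMin_externalField_lt (h₁ : z₁.im ≠ 0) (h₂ : z₂.im ≠ 0)
    (hre : z₁.re < z₂.re) (hγ₀ : 0 < γ) (hγ₁ : γ < 1) :
    ∃ m < z₁.re, IsLocalMin (externalField z₁ z₂ γ) m := by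
  have hd : 0 < logDistDeriv z₁ z₁.re - γ * logDistDeriv z₂ z₁.re := by
    rw [logDistDeriv, sub_self, zero_div, zero_sub, neg_pos]
    exact mul_neg_of_pos_of_neg hγ₀ (logDistDeriv_neg hre)
  exact exists_isLocalMin_mem_Iio_of_hasDerivAt_pos (continuous_externalField h₁ h₂)
    (tendsto_externalField_cocompact hγ₀.le hγ₁) (hasDerivAt_externalField h₁ h₂ _) hd

theorem exists_isLocalMin_externalField_gt (h₁ : z₁.im ≠ 0) (h₂ : z₂.im ≠ 0) {x₀ : ℝ}
    (hx₀ : logDistDeriv z₁ x₀ < γ * logDistDeriv z₂ x₀) (hγ₀ : 0 ≤ γ) (hγ₁ : γ < 1) :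
    ∃ m > x₀, IsLocalMin (externalField z₁ z₂ γ) m :=
  exists_isLocalMin_mem_Ioi_of_hasDerivAt_neg (continuous_externalField h₁ h₂)
    (tendsto_externalField_cocompact hγ₀ hγ₁) (hasDerivAt_externalField h₁ h₂ _)
    (sub_neg.2 hx₀)

end ExternalField

theorem exists_logDistDeriv_lt {z₁ z₂ : ℂ} (hre : z₁.re < z₂.re) :
    ∃ x > z₂.re, logDistDeriv z₁ x < logDistDeriv z₂ x := by
  set d := z₂.re - z₁.re
  set v := (z₂.im ^ 2 + 1) / d
  have hd : 0 < d := sub_pos.2 hre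
  have hv : 0 < v := by positivity
  have hvd : v * d = z₂.im ^ 2 + 1 := div_mul_cancel₀ _ hd.ne'
  refine ⟨z₂.re + v, by linarith, ?_⟩
  have hu : z₂.re + v - z₁.re = v + d := by ring
  rw [logDistDeriv, logDistDeriv, hu, add_sub_cancel_left,
    div_lt_div_iff₀ (by positivity) (by positivity)]
  -- with `u = v + d` this reads `u * z₂.im ^ 2 < d * u * v + v * z₁.im ^ 2`; note `v * d > z₂.im ^ 2`
  nlinarith [sq_nonneg z₁.im, sq_nonneg z₂.im, mul_pos hv hd]

/-- **Two minima of the external field created by an attractor/repellent pair.**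
For `z₁ = −1 + β₁ i`, `z₂ = 1 + β₂ i` with `β₁, β₂ > 0` and
`Q_γ(x) = log |x − z₁| − γ log |x − z₂|`, there is `Γ₀ ∈ (0,1)` such that for each
`γ ∈ (Γ₀, 1)` the field `Q_γ` has two local minima on `ℝ`, one in `(−∞, −1)` and the
other in `(1, ∞)`; moreover `Q_γ` is strictly increasing on `[−1, 1]`. -/
theorem external_field_two_minima
    (β₁ β₂ : ℝ) (hβ₁ : 0 < β₁) (hβ₂ : 0 < β₂)
    (z₁ z₂ : ℂ) (hz₁ : z₁ = -1 + (β₁ : ℂ) * Complex.I)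
    (hz₂ : z₂ = 1 + (β₂ : ℂ) * Complex.I)
    (Q : ℝ → ℝ → ℝ)
    (hQ : ∀ γ x, Q γ x = Real.log ‖(x : ℂ) - z₁‖
      - γ * Real.log ‖(x : ℂ) - z₂‖) :
    ∃ Γ₀ ∈ Ioo (0 : ℝ) 1, ∀ γ ∈ Ioo Γ₀ 1,
      (∃ m₁ ∈ Iio (-1 : ℝ), ∃ m₂ ∈ Ioi (1 : ℝ),
        IsLocalMin (Q γ) m₁ ∧ IsLocalMin (Q γ) m₂) ∧
      StrictMonoOn (Q γ) (Icc (-1 : ℝ) 1) := by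
  obtain rfl : Q = externalField z₁ z₂ := funext₂ hQ
  have hre₁ : z₁.re = -1 := by simp [hz₁]
  have hre₂ : z₂.re = 1 := by simp [hz₂]
  have him₁ : z₁.im ≠ 0 := by simp [hz₁, hβ₁.ne']
  have him₂ : z₂.im ≠ 0 := by simp [hz₂, hβ₂.ne']
  have hre : z₁.re < z₂.re := by rw [hre₁, hre₂]; norm_num
  obtain ⟨x₀, hx₀, hslope⟩ := exists_logDistDeriv_lt hre
  have hpos₁ : 0 < logDistDeriv z₁ x₀ := logDistDeriv_pos (hre.trans hx₀)
  have hpos₂ : 0 < logDistDeriv z₂ x₀ := logDistDeriv_pos hx₀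
  refine ⟨logDistDeriv z₁ x₀ / logDistDeriv z₂ x₀,
    ⟨div_pos hpos₁ hpos₂, (div_lt_one hpos₂).2 hslope⟩, fun γ ⟨hΓ₀, hγ₁⟩ => ?_⟩
  have hγ₀ : 0 < γ := (div_pos hpos₁ hpos₂).trans hΓ₀
  obtain ⟨m₁, hm₁, hmin₁⟩ := exists_isLocalMin_externalField_lt him₁ him₂ hre hγ₀ hγ₁
  obtain ⟨m₂, hm₂, hmin₂⟩ :=
    exists_isLocalMin_externalField_gt him₁ him₂ ((div_lt_iff₀ hpos₂).1 hΓ₀) hγ₀.le hγ₁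
  exact ⟨⟨m₁, hre₁ ▸ hm₁, m₂, hre₂ ▸ hx₀.trans hm₂, hmin₁, hmin₂⟩,
    hre₁ ▸ hre₂ ▸ strictMonoOn_externalField him₁ him₂ hγ₀.le⟩
end

section
/- Let β₁, β₂ > 0 and for γ ∈ (0,1) define f_γ(x) = (1/π)(β₁/((x+1)² + β₁²) − γβ₂/((x−1)² + β₂²)) for x ∈ ℝ, and set Γ₁ = (1/(2β₁β₂))((β₁² + β₂² + 4) − √((β₁² + β₂² + 4)² − 4β₁²β₂²)). Then Γ₁ ∈ (0,1); for every γ ∈ (0, Γ₁), f_γ(x) > 0 for all x ∈ ℝ; and for every γ ∈ (Γ₁, 1), there exists x ∈ ℝ with f_γ(x) < 0. -/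
/-!
Clearing the (positive) denominators, the sign of `f_γ(x)` is that of the quadratic
`(β₁ - γβ₂) x² - 2(β₁ + γβ₂) x + β₁(1 + β₂²) - γβ₂(1 + β₁²)`, whose discriminant is
`-4β₁β₂ (β₁β₂γ² - Sγ + β₁β₂)` with `S = β₁² + β₂² + 4`. The palindromic quadratic
`β₁β₂γ² - Sγ + β₁β₂` has the reciprocal roots `Γ₁ < 1 < 1/Γ₁`, so it is positive for `γ < Γ₁`
and negative for `Γ₁ < γ < 1`. In the first case the numerator has no real root, and its leading
coefficient is positive because the palindromic quadratic is `-4β₁/β₂ < 0` at `γ = β₁/β₂`, so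
`Γ₁ ≤ β₁/β₂`; in the second case the numerator takes negative values.
-/

open Real Set

section Discriminant

variable {K : Type*} [Field K] [LinearOrder K] [IsStrictOrderedRing K] {a b c : K}

theorem quadratic_pos_of_discrim_neg (ha : 0 < a) (h : discrim a b c < 0) (x : K) :
    0 < a * (x * x) + b * x + c := by
  have hsq : 4 * a * (a * (x * x) + b * x + c) = (2 * a * x + b) ^ 2 - discrim a b c := by
    rw [discrim]; ring
  have : 0 < 4 * a * (a * (x * x) + b * x + c) := by
    rw [hsq]; nlinarith [sq_nonneg (2 * a * x + b)]
  exact pos_of_mul_pos_right this (by positivity)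

theorem exists_quadratic_neg_of_discrim_pos (h : 0 < discrim a b c) :
    ∃ x, a * (x * x) + b * x + c < 0 := by
  by_contra! hx
  exact (discrim_le_zero hx).not_gt h

end Discriminant

section PalindromicQuadratic

variable {P S Γ : ℝ}

theorem smallerRoot_spec (hP : 0 < P) (hPS : 2 * P < S)
    (hΓ : 2 * P * Γ = S - √(S ^ 2 - 4 * P ^ 2)) :
    0 < Γ ∧ Γ < 1 ∧ P * Γ ^ 2 - S * Γ + P = 0 := by
  have hdisc : 0 < S ^ 2 - 4 * P ^ 2 := by nlinarith
  set r := √(S ^ 2 - 4 * P ^ 2)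
  have hr2 : r ^ 2 = S ^ 2 - 4 * P ^ 2 := sq_sqrt hdisc.le
  have hr0 : 0 < r := sqrt_pos.mpr hdisc
  have hrS : r < S := by nlinarith
  have hΓ0 : 0 < Γ := by nlinarith
  have hroot : P * Γ ^ 2 - S * Γ + P = 0 := by
    have : 4 * P * (P * Γ ^ 2 - S * Γ + P) = 0 := by
      linear_combination (2 * P * Γ - S - r) * hΓ + hr2
    simpa [hP.ne'] using this
  -- `P (1 - Γ²) = r Γ > 0`
  have hΓ1 : Γ < 1 := by nlinarith [mul_pos hr0 hΓ0]
  exact ⟨hΓ0, hΓ1, hroot⟩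

theorem palindromic_factor (hroot : P * Γ ^ 2 - S * Γ + P = 0) (t : ℝ) :
    Γ * (P * t ^ 2 - S * t + P) = P * (Γ - t) * (1 - Γ * t) := by
  linear_combination t * hroot

theorem palindromic_pos_of_lt_smallerRoot (hP : 0 < P) (hΓ0 : 0 < Γ) (hΓ1 : Γ < 1)
    (hroot : P * Γ ^ 2 - S * Γ + P = 0) {t : ℝ} (ht : t < Γ) :
    0 < P * t ^ 2 - S * t + P := by
  have h1 : 0 < 1 - Γ * t :=
    sub_pos.mpr (mul_lt_one_of_nonneg_of_lt_one_left hΓ0.le hΓ1 (ht.trans hΓ1).le)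
  have : 0 < Γ * (P * t ^ 2 - S * t + P) := by
    rw [palindromic_factor hroot]
    exact mul_pos (mul_pos hP (sub_pos.mpr ht)) h1
  exact pos_of_mul_pos_right this hΓ0.le

theorem palindromic_neg_of_smallerRoot_lt (hP : 0 < P) (hΓ0 : 0 < Γ) (hΓ1 : Γ < 1)
    (hroot : P * Γ ^ 2 - S * Γ + P = 0) {t : ℝ} (ht : Γ < t) (ht1 : t < 1) :
    P * t ^ 2 - S * t + P < 0 := by
  have h1 : 0 < 1 - Γ * t := sub_pos.mpr (mul_lt_one_of_nonneg_of_lt_one_left hΓ0.le hΓ1 ht1.le)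
  have : Γ * (P * t ^ 2 - S * t + P) < 0 := by
    rw [palindromic_factor hroot]
    exact mul_neg_of_neg_of_pos (mul_neg_of_pos_of_neg hP (sub_neg.mpr ht)) h1
  exact neg_of_mul_neg_right this hΓ0.le

end PalindromicQuadratic

section Density

variable {β₁ β₂ : ℝ} (γ : ℝ)

theorem density_eq_quadratic_div (x : ℝ) (hβ₁ : 0 < β₁) (hβ₂ : 0 < β₂) :
    β₁ / ((x + 1) ^ 2 + β₁ ^ 2) - γ * β₂ / ((x - 1) ^ 2 + β₂ ^ 2) =
      ((β₁ - γ * β₂) * (x * x) + -2 * (β₁ + γ * β₂) * x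
          + (β₁ * (1 + β₂ ^ 2) - γ * β₂ * (1 + β₁ ^ 2))) /
        (((x + 1) ^ 2 + β₁ ^ 2) * ((x - 1) ^ 2 + β₂ ^ 2)) := by
  rw [div_sub_div _ _ (by positivity) (by positivity)]
  ring

theorem discrim_density_numerator :
    discrim (β₁ - γ * β₂) (-2 * (β₁ + γ * β₂)) (β₁ * (1 + β₂ ^ 2) - γ * β₂ * (1 + β₁ ^ 2)) =
      -4 * (β₁ * β₂) * (β₁ * β₂ * γ ^ 2 - (β₁ ^ 2 + β₂ ^ 2 + 4) * γ + β₁ * β₂) := by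
  rw [discrim]; ring

theorem smallerRoot_le_div (hβ₁ : 0 < β₁) (hβ₂ : 0 < β₂) {Γ : ℝ} (hΓ0 : 0 < Γ) (hΓ1 : Γ < 1)
    (hroot : β₁ * β₂ * Γ ^ 2 - (β₁ ^ 2 + β₂ ^ 2 + 4) * Γ + β₁ * β₂ = 0) :
    Γ ≤ β₁ / β₂ := by
  refine not_lt.mp fun h ↦ ?_
  have hpos := palindromic_pos_of_lt_smallerRoot (mul_pos hβ₁ hβ₂) hΓ0 hΓ1 hroot h
  have hval : β₁ * β₂ * (β₁ / β₂) ^ 2 - (β₁ ^ 2 + β₂ ^ 2 + 4) * (β₁ / β₂) + β₁ * β₂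
      = -4 * (β₁ / β₂) := by field_simp; ring
  rw [hval] at hpos
  linarith [div_pos hβ₁ hβ₂]

theorem density_pos (x : ℝ) (hβ₁ : 0 < β₁) (hβ₂ : 0 < β₂) (hlead : γ * β₂ < β₁)
    (hX : 0 < β₁ * β₂ * γ ^ 2 - (β₁ ^ 2 + β₂ ^ 2 + 4) * γ + β₁ * β₂) :
    0 < β₁ / ((x + 1) ^ 2 + β₁ ^ 2) - γ * β₂ / ((x - 1) ^ 2 + β₂ ^ 2) := by
  have hdisc := discrim_density_numerator (β₁ := β₁) (β₂ := β₂) γ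
  rw [density_eq_quadratic_div γ x hβ₁ hβ₂]
  refine div_pos (quadratic_pos_of_discrim_neg (sub_pos.mpr hlead) ?_ x) (by positivity)
  rw [hdisc]
  nlinarith [mul_pos hβ₁ hβ₂]

theorem exists_density_neg (hβ₁ : 0 < β₁) (hβ₂ : 0 < β₂)
    (hX : β₁ * β₂ * γ ^ 2 - (β₁ ^ 2 + β₂ ^ 2 + 4) * γ + β₁ * β₂ < 0) :
    ∃ x, β₁ / ((x + 1) ^ 2 + β₁ ^ 2) - γ * β₂ / ((x - 1) ^ 2 + β₂ ^ 2) < 0 := by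
  have hdisc : 0 < discrim (β₁ - γ * β₂) (-2 * (β₁ + γ * β₂))
      (β₁ * (1 + β₂ ^ 2) - γ * β₂ * (1 + β₁ ^ 2)) := by
    rw [discrim_density_numerator]
    nlinarith [mul_pos hβ₁ hβ₂]
  obtain ⟨x, hx⟩ := exists_quadratic_neg_of_discrim_pos hdisc
  refine ⟨x, ?_⟩
  rw [density_eq_quadratic_div γ x hβ₁ hβ₂]
  exact div_neg_of_neg_of_pos hx (by positivity)

end Density

/-- **Threshold for positivity of the density of the signed equilibrium measure.**
With `f_γ(x) = (1/π)(β₁/((x+1)² + β₁²) − γ β₂/((x−1)² + β₂²))` and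
`Γ₁ = (1/(2β₁β₂))((β₁² + β₂² + 4) − √((β₁² + β₂² + 4)² − 4β₁²β₂²))`, one has
`Γ₁ ∈ (0,1)`; for `γ ∈ (0, Γ₁)` the density `f_γ` is everywhere positive, while for
`γ ∈ (Γ₁, 1)` it is negative somewhere. -/
theorem signed_density_positivity_threshold
    (β₁ β₂ : ℝ) (hβ₁ : 0 < β₁) (hβ₂ : 0 < β₂)
    (f : ℝ → ℝ → ℝ)
    (hf : ∀ γ x, f γ x = (1 / π) *
      (β₁ / ((x + 1) ^ 2 + β₁ ^ 2) - γ * β₂ / ((x - 1) ^ 2 + β₂ ^ 2)))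
    (Γ₁ : ℝ)
    (hΓ₁ : Γ₁ = (1 / (2 * β₁ * β₂)) * ((β₁ ^ 2 + β₂ ^ 2 + 4)
      - Real.sqrt ((β₁ ^ 2 + β₂ ^ 2 + 4) ^ 2 - 4 * β₁ ^ 2 * β₂ ^ 2))) :
    Γ₁ ∈ Ioo (0 : ℝ) 1 ∧
    (∀ γ ∈ Ioo (0 : ℝ) Γ₁, ∀ x : ℝ, 0 < f γ x) ∧
    (∀ γ ∈ Ioo Γ₁ (1 : ℝ), ∃ x : ℝ, f γ x < 0) := by
  have hP : 0 < β₁ * β₂ := mul_pos hβ₁ hβ₂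
  have hPS : 2 * (β₁ * β₂) < β₁ ^ 2 + β₂ ^ 2 + 4 := by nlinarith [sq_nonneg (β₁ - β₂)]
  have hΓ : 2 * (β₁ * β₂) * Γ₁ = (β₁ ^ 2 + β₂ ^ 2 + 4)
      - √((β₁ ^ 2 + β₂ ^ 2 + 4) ^ 2 - 4 * (β₁ * β₂) ^ 2) := by
    rw [hΓ₁, mul_pow]; field_simp
  obtain ⟨hΓ0, hΓ1, hroot⟩ := smallerRoot_spec hP hPS hΓ
  have hratio := smallerRoot_le_div hβ₁ hβ₂ hΓ0 hΓ1 hroot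
  refine ⟨⟨hΓ0, hΓ1⟩, ?_, ?_⟩
  · rintro γ ⟨-, hγ⟩ x
    have hlead : γ * β₂ < β₁ := (lt_div_iff₀ hβ₂).mp (hγ.trans_le hratio)
    rw [hf]
    exact mul_pos (by positivity) (density_pos γ x hβ₁ hβ₂ hlead
      (palindromic_pos_of_lt_smallerRoot hP hΓ0 hΓ1 hroot hγ))
  · rintro γ ⟨hγ, hγ1⟩
    obtain ⟨x, hx⟩ := exists_density_neg γ hβ₁ hβ₂
      (palindromic_neg_of_smallerRoot_lt hP hΓ0 hΓ1 hroot hγ hγ1)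
    exact ⟨x, by rw [hf]; exact mul_neg_of_pos_of_neg (by positivity) hx⟩
end

section
/- Let β₁, β₂ > 0, set Γ₁ = (1/(2β₁β₂))((β₁² + β₂² + 4) − √((β₁² + β₂² + 4)² − 4β₁²β₂²)), x₀ = (β₂² − β₁²)/4 and x₂ = x₀ + (1/4)√((β₂² − β₁²)² + 8(β₁² + β₂² + 2)). Then for γ = Γ₁, the function f_γ(x) = (1/π)(β₁/((x+1)² + β₁²) − γβ₂/((x−1)² + β₂²)) satisfies f_γ(x) ≥ 0 for all x ∈ ℝ, with equality if and only if x = x₂; i.e., the density of the signed equilibrium measure has a double real zero located exactly at x₂. -/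
open Real Set

/-! Clearing denominators, `f_γ` has the sign of the quadratic
`β₁((x−1)² + β₂²) − γβ₂((x+1)² + β₁²)`. The defining equation of `Γ₁` says that the
discriminant of this quadratic vanishes, so at `γ = Γ₁` it is a positive multiple of
`(x − x₂)²`. -/

lemma sub_lt_sqrt_sq_sub_four_mul {u v w : ℝ} (hu : 0 < u) (hwv : w < v) :
    v - u < √((u + v) ^ 2 - 4 * u * w) :=
  Real.lt_sqrt_of_sq_lt (by nlinarith [mul_pos hu (sub_pos.2 hwv)])

lemma two_mul_density_numerator_eq_mul_sq (β₁ β₂ c D x : ℝ)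
    (hD : D ^ 2 = (β₁ ^ 2 + β₂ ^ 2 + 4) ^ 2 - 4 * β₁ ^ 2 * β₂ ^ 2)
    (hc : 2 * β₁ * c = β₁ ^ 2 + β₂ ^ 2 + 4 - D) :
    2 * β₁ * (β₁ * ((x - 1) ^ 2 + β₂ ^ 2) - c * ((x + 1) ^ 2 + β₁ ^ 2))
      = (β₁ ^ 2 - β₂ ^ 2 - 4 + D) * (x - (β₂ ^ 2 - β₁ ^ 2 + D) / 4) ^ 2 := by
  linear_combination (-((x + 1) ^ 2 + β₁ ^ 2)) * hc
    + ((8 * x - β₂ ^ 2 + β₁ ^ 2 + 4 - D) / 16) * hD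

lemma nonneg_and_eq_zero_iff_of_mul_eq_mul_sq {g k : ℝ → ℝ} {a r : ℝ}
    (hk : ∀ x, 0 < k x) (ha : 0 < a) (h : ∀ x, k x * g x = a * (x - r) ^ 2) :
    (∀ x, 0 ≤ g x) ∧ ∀ x, g x = 0 ↔ x = r := by
  have hg : ∀ x, g x = a * (x - r) ^ 2 / k x := fun x => by
    rw [← h, mul_div_cancel_left₀ _ (hk x).ne']
  refine ⟨fun x => by rw [hg]; have := hk x; positivity, fun x => ?_⟩
  rw [hg, div_eq_zero_iff, or_iff_left (hk x).ne', mul_eq_zero, or_iff_right ha.ne',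
    pow_eq_zero_iff two_ne_zero, sub_eq_zero]

/-- **Location of the double zero at the first transition.** At `γ = Γ₁`, the density
`f_γ(x) = (1/π)(β₁/((x+1)² + β₁²) − γ β₂/((x−1)² + β₂²))` of the signed equilibrium
measure is nonnegative on `ℝ` and vanishes exactly at the point
`x₂ = x₀ + (1/4)√((β₂² − β₁²)² + 8(β₁² + β₂² + 2))`, `x₀ = (β₂² − β₁²)/4`;
i.e. it has a double real zero located exactly at `x₂`. -/
theorem signed_density_double_zero_at_x₂
    (β₁ β₂ : ℝ) (hβ₁ : 0 < β₁) (hβ₂ : 0 < β₂)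
    (Γ₁ : ℝ)
    (hΓ₁ : Γ₁ = (1 / (2 * β₁ * β₂)) * ((β₁ ^ 2 + β₂ ^ 2 + 4)
      - Real.sqrt ((β₁ ^ 2 + β₂ ^ 2 + 4) ^ 2 - 4 * β₁ ^ 2 * β₂ ^ 2)))
    (x₀ x₂ : ℝ) (hx₀ : x₀ = (β₂ ^ 2 - β₁ ^ 2) / 4)
    (hx₂ : x₂ = x₀ + (1 / 4) *
      Real.sqrt ((β₂ ^ 2 - β₁ ^ 2) ^ 2 + 8 * (β₁ ^ 2 + β₂ ^ 2 + 2)))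
    (f : ℝ → ℝ → ℝ)
    (hf : ∀ γ x, f γ x = (1 / π) *
      (β₁ / ((x + 1) ^ 2 + β₁ ^ 2) - γ * β₂ / ((x - 1) ^ 2 + β₂ ^ 2))) :
    (∀ x : ℝ, 0 ≤ f Γ₁ x) ∧ (∀ x : ℝ, f Γ₁ x = 0 ↔ x = x₂) := by
  set D := √((β₁ ^ 2 + β₂ ^ 2 + 4) ^ 2 - 4 * β₁ ^ 2 * β₂ ^ 2)
  have hD : D ^ 2 = (β₁ ^ 2 + β₂ ^ 2 + 4) ^ 2 - 4 * β₁ ^ 2 * β₂ ^ 2 :=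
    Real.sq_sqrt (by nlinarith [sq_nonneg (β₁ ^ 2 - β₂ ^ 2), sq_nonneg β₁, sq_nonneg β₂])
  have hc : 2 * β₁ * (Γ₁ * β₂) = β₁ ^ 2 + β₂ ^ 2 + 4 - D := by
    rw [hΓ₁]; field_simp
  have hx₂D : x₂ = (β₂ ^ 2 - β₁ ^ 2 + D) / 4 := by
    rw [hx₂, hx₀, show (β₂ ^ 2 - β₁ ^ 2) ^ 2 + 8 * (β₁ ^ 2 + β₂ ^ 2 + 2)
      = (β₁ ^ 2 + β₂ ^ 2 + 4) ^ 2 - 4 * β₁ ^ 2 * β₂ ^ 2 by ring]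
    ring
  have hlead : 0 < β₁ ^ 2 - β₂ ^ 2 - 4 + D := by
    have := sub_lt_sqrt_sq_sub_four_mul (u := β₁ ^ 2) (v := β₂ ^ 2 + 4) (w := β₂ ^ 2)
      (by positivity) (by linarith)
    rw [show β₁ ^ 2 + (β₂ ^ 2 + 4) = β₁ ^ 2 + β₂ ^ 2 + 4 by ring] at this
    linarith
  refine nonneg_and_eq_zero_iff_of_mul_eq_mul_sq
    (k := fun x => 2 * β₁ * π * ((x + 1) ^ 2 + β₁ ^ 2) * ((x - 1) ^ 2 + β₂ ^ 2))
    (fun x => by positivity) hlead fun x => ?_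
  rw [hx₂D, ← two_mul_density_numerator_eq_mul_sq β₁ β₂ _ D x hD hc, hf]
  field_simp
end

section
/- Let β₁, β₂ > 0, Γ₁ = (1/(2β₁β₂))((β₁² + β₂² + 4) − √((β₁² + β₂² + 4)² − 4β₁²β₂²)), and x₀ = (β₂² − β₁²)/4. For γ ∈ (0, Γ₁), the quadratic polynomial p_γ(x) = β₁((x−1)² + β₂²) − γβ₂((x+1)² + β₁²) has positive leading coefficient β₁ − γβ₂ > 0 and no real roots; its two complex conjugate roots b, b̄ satisfy |b − x₀|² = (1 − x₀)² + β₂² (i.e., b lies on the circle through z₂ = 1 + β₂·i centered at x₀), the modulus |b − x₀| being independent of γ; and Re b = (β₁ + γβ₂)/(β₁ − γβ₂) is strictly increasing in γ on (0, Γ₁). -/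
/-!
After clearing denominators, `p_γ = β₁ P₂ - γ β₂ P₁` with `Pⱼ(w) = (w - zⱼ)(w - z̄ⱼ)`. The roots
`u ± iv` of a real quadratic `a w² + b w + c` with negative discriminant satisfy `u = -b/(2a)` and
`|u ± iv - x₀|² = x₀² + (c + x₀ b)/a`, so "the roots lie on the circle of centre `x₀` and radius
`R`" is the linear condition `c + x₀ b = a (R² - x₀²)` on the coefficients. `P₁` and `P₂` both
satisfy it for the circle through `z₁` and `z₂`, hence so does every `p_γ`.

The discriminant of `p_γ` is `-4 β₁ β₂ q(γ)` with `q(γ) = β₁β₂ γ² - (β₁² + β₂² + 4) γ + β₁β₂`,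
whose smaller root is `Γ₁`, so it is negative on `(0, Γ₁)`. Since `q(β₁/β₂) = -4 β₁/β₂ < 0`, also
`Γ₁ < β₁/β₂`, which keeps the leading coefficient `β₁ - γ β₂` positive.
-/

open Real Set Complex ComplexConjugate

section ComplexRootsOfRealQuadratic

variable {a b c : ℝ}

noncomputable def quadRoot (a b c : ℝ) : ℂ :=
  (-b + √(-discrim a b c) * I) / (2 * a)

theorem quadRoot_re : (quadRoot a b c).re = -b / (2 * a) := by
  rw [quadRoot, ← ofReal_ofNat, ← ofReal_mul, div_ofReal_re]
  simp

theorem quadRoot_im : (quadRoot a b c).im = √(-discrim a b c) / (2 * a) := by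
  rw [quadRoot, ← ofReal_ofNat, ← ofReal_mul, div_ofReal_im]
  simp

theorem quadratic_eq_zero_iff_of_discrim_neg (ha : a ≠ 0) (hd : discrim a b c < 0) (z : ℂ) :
    (a : ℂ) * (z * z) + b * z + c = 0 ↔ z = quadRoot a b c ∨ z = conj (quadRoot a b c) := by
  set s : ℂ := √(-discrim a b c) * I
  have hs : discrim (a : ℂ) b c = s * s := by
    have h : ((√(-discrim a b c) : ℝ) : ℂ) ^ 2 = -((discrim a b c : ℝ) : ℂ) := by
      rw [← ofReal_pow, Real.sq_sqrt (by linarith), ofReal_neg]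
    rw [show discrim (a : ℂ) b c = ((discrim a b c : ℝ) : ℂ) by push_cast [discrim]; rfl]
    linear_combination h - ((√(-discrim a b c) : ℝ) : ℂ) ^ 2 * I_sq
  have hconj : conj (quadRoot a b c) = (-b - s) / (2 * a) := by
    simp [quadRoot, s, map_div₀, map_ofNat, sub_eq_add_neg]
  rw [quadratic_eq_zero_iff (by exact_mod_cast ha) hs, hconj]
  rfl

theorem quadRoot_im_ne_zero (ha : a ≠ 0) (hd : discrim a b c < 0) : (quadRoot a b c).im ≠ 0 := by
  rw [quadRoot_im]
  exact div_ne_zero (Real.sqrt_pos.2 (neg_pos.2 hd)).ne' (mul_ne_zero two_ne_zero ha)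

theorem norm_quadRoot_sub_ofReal_sq (ha : a ≠ 0) (hd : discrim a b c < 0) (x₀ : ℝ) :
    ‖quadRoot a b c - x₀‖ ^ 2 = x₀ ^ 2 + (c + x₀ * b) / a := by
  rw [← normSq_eq_norm_sq, normSq_apply, sub_re, sub_im, ofReal_re, ofReal_im, sub_zero,
    quadRoot_re, quadRoot_im, div_mul_div_comm, Real.mul_self_sqrt (neg_nonneg.2 hd.le), discrim]
  field_simp
  ring

variable {z : ℂ}

theorem im_ne_zero_of_quadratic_eq_zero (ha : a ≠ 0) (hd : discrim a b c < 0)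
    (hz : (a : ℂ) * (z * z) + b * z + c = 0) : z.im ≠ 0 := by
  rcases (quadratic_eq_zero_iff_of_discrim_neg ha hd z).1 hz with rfl | rfl
  · exact quadRoot_im_ne_zero ha hd
  · simpa using quadRoot_im_ne_zero ha hd

theorem re_eq_of_quadratic_eq_zero (ha : a ≠ 0) (hd : discrim a b c < 0)
    (hz : (a : ℂ) * (z * z) + b * z + c = 0) : z.re = -b / (2 * a) := by
  rcases (quadratic_eq_zero_iff_of_discrim_neg ha hd z).1 hz with rfl | rfl
  · exact quadRoot_re
  · rw [conj_re, quadRoot_re]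

theorem norm_sub_ofReal_sq_of_quadratic_eq_zero (ha : a ≠ 0) (hd : discrim a b c < 0)
    (hz : (a : ℂ) * (z * z) + b * z + c = 0) (x₀ : ℝ) :
    ‖z - x₀‖ ^ 2 = x₀ ^ 2 + (c + x₀ * b) / a := by
  rcases (quadratic_eq_zero_iff_of_discrim_neg ha hd z).1 hz with rfl | rfl
  · exact norm_quadRoot_sub_ofReal_sq ha hd x₀
  · rw [← conj_ofReal, ← map_sub, norm_conj, norm_quadRoot_sub_ofReal_sq ha hd x₀]

end ComplexRootsOfRealQuadratic

section SmallerRoot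

variable {a b c r x : ℝ}

-- Both lemmas rest on `(2 a x + b)² - discrim a b c = 4 a (a x² + b x + c)`.

theorem quadratic_pos_of_lt_smaller_root (ha : 0 < a) (hr : 2 * a * r = -b - √(discrim a b c))
    (hx : x < r) : 0 < a * (x * x) + b * x + c := by
  have hlt : √(discrim a b c) < -(2 * a * x + b) := by nlinarith
  have hsq : discrim a b c < (2 * a * x + b) ^ 2 :=
    calc discrim a b c ≤ √(discrim a b c) ^ 2 := by rw [Real.sq_sqrt']; exact le_max_left _ _
      _ < (2 * a * x + b) ^ 2 := by nlinarith [Real.sqrt_nonneg (discrim a b c)]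
  unfold discrim at hsq
  nlinarith

theorem smaller_root_lt_of_quadratic_neg (ha : 0 < a) (hr : 2 * a * r = -b - √(discrim a b c))
    (hx : a * (x * x) + b * x + c < 0) : r < x := by
  have hsq : (2 * a * x + b) ^ 2 < discrim a b c := by unfold discrim; nlinarith
  have hlt : -(2 * a * x + b) < √(discrim a b c) := Real.lt_sqrt_of_sq_lt (by rwa [neg_sq])
  nlinarith

end SmallerRoot

theorem strictMonoOn_add_mul_div_sub_mul {u v : ℝ} (hu : 0 < u) (hv : 0 < v) :
    StrictMonoOn (fun t : ℝ => (u + t * v) / (u - t * v)) (Iio (u / v)) := by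
  intro s hs t ht hst
  rw [mem_Iio, lt_div_iff₀ hv] at hs ht
  simp only
  rw [div_lt_div_iff₀ (by linarith) (by linarith)]
  nlinarith [mul_pos hu hv]

section Pencil

variable (β₁ β₂ γ : ℝ)

theorem discrim_pencil :
    discrim (β₁ - γ * β₂) (-2 * (β₁ + γ * β₂)) (β₁ * (1 + β₂ ^ 2) - γ * β₂ * (1 + β₁ ^ 2)) =
      -4 * (β₁ * β₂) * (β₁ * β₂ * (γ * γ) + -(β₁ ^ 2 + β₂ ^ 2 + 4) * γ + β₁ * β₂) := by
  unfold discrim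
  ring

theorem pencil_circle {x₀ : ℝ} (hx₀ : x₀ = (β₂ ^ 2 - β₁ ^ 2) / 4) (h : β₁ - γ * β₂ ≠ 0) :
    x₀ ^ 2 + (β₁ * (1 + β₂ ^ 2) - γ * β₂ * (1 + β₁ ^ 2) + x₀ * (-2 * (β₁ + γ * β₂))) /
      (β₁ - γ * β₂) = (1 - x₀) ^ 2 + β₂ ^ 2 := by
  rw [show β₁ * (1 + β₂ ^ 2) - γ * β₂ * (1 + β₁ ^ 2) + x₀ * (-2 * (β₁ + γ * β₂)) =
      (β₁ - γ * β₂) * ((1 - x₀) ^ 2 + β₂ ^ 2 - x₀ ^ 2) by subst hx₀; ring,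
    mul_div_cancel_left₀ _ h]
  ring

theorem pencil_eq_quadratic (w : ℂ) :
    (β₁ : ℂ) * ((w - 1) ^ 2 + (β₂ : ℂ) ^ 2) - (γ : ℂ) * (β₂ : ℂ) * ((w + 1) ^ 2 + (β₁ : ℂ) ^ 2) =
      ((β₁ - γ * β₂ : ℝ) : ℂ) * (w * w) + ((-2 * (β₁ + γ * β₂) : ℝ) : ℂ) * w
        + ((β₁ * (1 + β₂ ^ 2) - γ * β₂ * (1 + β₁ ^ 2) : ℝ) : ℂ) := by
  push_cast
  ring

end Pencil

/-- **Motion of the complex conjugate roots along the circle during Phase 1.**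
For `γ ∈ (0, Γ₁)`, the quadratic `p_γ(x) = β₁((x−1)² + β₂²) − γβ₂((x+1)² + β₁²)` has
positive leading coefficient `β₁ − γβ₂` and no real roots; each of its complex roots
`b` satisfies `|b − x₀|² = (1 − x₀)² + β₂²` (so `b` lies on the circle through
`z₂ = 1 + β₂ i` centered at `x₀`, independently of `γ`) and
`Re b = (β₁ + γβ₂)/(β₁ − γβ₂)`, which is strictly increasing in `γ` on `(0, Γ₁)`. -/
theorem conjugate_roots_on_circle
    (β₁ β₂ : ℝ) (hβ₁ : 0 < β₁) (hβ₂ : 0 < β₂)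
    (Γ₁ : ℝ)
    (hΓ₁ : Γ₁ = (1 / (2 * β₁ * β₂)) * ((β₁ ^ 2 + β₂ ^ 2 + 4)
      - Real.sqrt ((β₁ ^ 2 + β₂ ^ 2 + 4) ^ 2 - 4 * β₁ ^ 2 * β₂ ^ 2)))
    (x₀ : ℝ) (hx₀ : x₀ = (β₂ ^ 2 - β₁ ^ 2) / 4)
    (p : ℝ → ℂ → ℂ)
    (hp : ∀ γ w, p γ w = (β₁ : ℂ) * ((w - 1) ^ 2 + (β₂ : ℂ) ^ 2)
      - (γ : ℂ) * (β₂ : ℂ) * ((w + 1) ^ 2 + (β₁ : ℂ) ^ 2)) :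
    (∀ γ ∈ Ioo (0 : ℝ) Γ₁,
      0 < β₁ - γ * β₂ ∧
      (∀ x : ℝ, p γ (x : ℂ) ≠ 0) ∧
      (∃ b : ℂ, b.im ≠ 0 ∧ p γ b = 0 ∧ p γ (starRingEnd ℂ b) = 0) ∧
      (∀ b : ℂ, p γ b = 0 →
        ‖b - (x₀ : ℂ)‖ ^ 2 = (1 - x₀) ^ 2 + β₂ ^ 2 ∧
        b.re = (β₁ + γ * β₂) / (β₁ - γ * β₂))) ∧
    StrictMonoOn (fun γ : ℝ => (β₁ + γ * β₂) / (β₁ - γ * β₂)) (Ioo (0 : ℝ) Γ₁) := by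
  have hA : 0 < β₁ * β₂ := mul_pos hβ₁ hβ₂
  have hΓ₁_root : 2 * (β₁ * β₂) * Γ₁ =
      -(-(β₁ ^ 2 + β₂ ^ 2 + 4)) - √(discrim (β₁ * β₂) (-(β₁ ^ 2 + β₂ ^ 2 + 4)) (β₁ * β₂)) := by
    rw [hΓ₁, discrim]
    field_simp
  have hΓ₁_lt : Γ₁ < β₁ / β₂ := smaller_root_lt_of_quadratic_neg hA hΓ₁_root (by
    field_simp
    nlinarith)
  refine ⟨fun γ hγ => ?_, (strictMonoOn_add_mul_div_sub_mul hβ₁ hβ₂).mono fun γ hγ =>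
    hγ.2.trans hΓ₁_lt⟩
  have ha : 0 < β₁ - γ * β₂ := sub_pos.2 ((lt_div_iff₀ hβ₂).1 (hγ.2.trans hΓ₁_lt))
  have hd : discrim (β₁ - γ * β₂) (-2 * (β₁ + γ * β₂))
      (β₁ * (1 + β₂ ^ 2) - γ * β₂ * (1 + β₁ ^ 2)) < 0 := by
    rw [discrim_pencil]
    have hq := quadratic_pos_of_lt_smaller_root hA hΓ₁_root hγ.2
    nlinarith
  simp only [hp, pencil_eq_quadratic]
  refine ⟨ha, fun x hx => by simpa using im_ne_zero_of_quadratic_eq_zero ha.ne' hd hx,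
    ⟨quadRoot _ _ _, quadRoot_im_ne_zero ha.ne' hd, ?_⟩, fun b hb => ⟨?_, ?_⟩⟩
  · exact ⟨(quadratic_eq_zero_iff_of_discrim_neg ha.ne' hd _).2 (.inl rfl),
      (quadratic_eq_zero_iff_of_discrim_neg ha.ne' hd _).2 (.inr rfl)⟩
  · rw [norm_sub_ofReal_sq_of_quadratic_eq_zero ha.ne' hd hb, pencil_circle _ _ _ hx₀ ha.ne']
  · rw [re_eq_of_quadratic_eq_zero ha.ne' hd hb]
    field_simp
end

section
/- Let 0 < β₁ < β₂ and f_γ(x) = (1/π)(β₁/((x+1)² + β₁²) − γβ₂/((x−1)² + β₂²)). (a) For γ = β₁/β₂, there exists A₁ ∈ ℝ such that f_γ(x) ≥ 0 if and only if x ≤ A₁; hence the support of the positive part of the signed equilibrium measure equals (−∞, A₁]. (b) For every γ ∈ (β₁/β₂, 1), there exist real numbers Ã₂ < A₁ such that f_γ(x) ≥ 0 if and only if x ∈ [Ã₂, A₁]; hence the support of the positive part of the signed equilibrium measure is the compact interval [Ã₂, A₁]. -/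
/-!
Clearing the (positive) denominators, `f_γ(x)` has the sign of the quadratic
`N(x) = β₁((x-1)² + β₂²) - γβ₂((x+1)² + β₁²)`, whose leading coefficient is `β₁ - γβ₂`.
At `γ = β₁/β₂` the quadratic terms cancel and `N` is a decreasing affine function, which gives
the half-line. For `γ > β₁/β₂` the quadratic is concave, and completing the square,
`(γβ₂ - β₁) N(x) = D - ((γβ₂ - β₁)x + β₁ + γβ₂)²` with `D = β₁β₂(4γ + (γβ₂ - β₁)(β₂ - γβ₁)) > 0`,
so `N ≥ 0` exactly between its two real roots.
-/

open Real Set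

noncomputable def signedDensity (β₁ β₂ γ x : ℝ) : ℝ :=
  (1 / π) * (β₁ / ((x + 1) ^ 2 + β₁ ^ 2) - γ * β₂ / ((x - 1) ^ 2 + β₂ ^ 2))

def signedDensityNumer (β₁ β₂ γ x : ℝ) : ℝ :=
  β₁ * ((x - 1) ^ 2 + β₂ ^ 2) - γ * β₂ * ((x + 1) ^ 2 + β₁ ^ 2)

lemma sub_sq_nonneg_iff_mem_Icc {a b s x : ℝ} (ha : 0 < a) (hs : 0 ≤ s) :
    0 ≤ s ^ 2 - (a * x + b) ^ 2 ↔ x ∈ Icc ((-b - s) / a) ((-b + s) / a) := by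
  rw [sub_nonneg, sq_le_sq, abs_of_nonneg hs, abs_le, mem_Icc, div_le_iff₀ ha, le_div_iff₀ ha]
  constructor <;> rintro ⟨h₁, h₂⟩ <;> constructor <;> linarith

lemma sub_sq_pos_iff_mem_Ioo {a b s x : ℝ} (ha : 0 < a) (hs : 0 ≤ s) :
    0 < s ^ 2 - (a * x + b) ^ 2 ↔ x ∈ Ioo ((-b - s) / a) ((-b + s) / a) := by
  rw [sub_pos, sq_lt_sq, abs_of_nonneg hs, abs_lt, mem_Ioo, div_lt_iff₀ ha, lt_div_iff₀ ha]
  constructor <;> rintro ⟨h₁, h₂⟩ <;> constructor <;> linarith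

section

variable {β₁ β₂ γ x : ℝ}

lemma signedDensity_eq_numer_div (hβ₁ : β₁ ≠ 0) (hβ₂ : β₂ ≠ 0) :
    signedDensity β₁ β₂ γ x = signedDensityNumer β₁ β₂ γ x /
      (π * (((x + 1) ^ 2 + β₁ ^ 2) * ((x - 1) ^ 2 + β₂ ^ 2))) := by
  have : 0 < (x + 1) ^ 2 + β₁ ^ 2 := by positivity
  have : 0 < (x - 1) ^ 2 + β₂ ^ 2 := by positivity
  unfold signedDensity signedDensityNumer
  field_simp

lemma signedDensity_nonneg_iff (hβ₁ : β₁ ≠ 0) (hβ₂ : β₂ ≠ 0) :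
    0 ≤ signedDensity β₁ β₂ γ x ↔ 0 ≤ signedDensityNumer β₁ β₂ γ x := by
  rw [signedDensity_eq_numer_div hβ₁ hβ₂, le_div_iff₀ (by positivity), zero_mul]

lemma signedDensity_pos_iff (hβ₁ : β₁ ≠ 0) (hβ₂ : β₂ ≠ 0) :
    0 < signedDensity β₁ β₂ γ x ↔ 0 < signedDensityNumer β₁ β₂ γ x := by
  rw [signedDensity_eq_numer_div hβ₁ hβ₂, lt_div_iff₀ (by positivity), zero_mul]

lemma signedDensityNumer_div_self (hβ₂ : β₂ ≠ 0) :
    signedDensityNumer β₁ β₂ (β₁ / β₂) x = β₁ * (β₂ ^ 2 - β₁ ^ 2 - 4 * x) := by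
  unfold signedDensityNumer
  rw [div_mul_cancel₀ _ hβ₂]
  ring

lemma mul_signedDensityNumer_eq_sub_sq :
    (γ * β₂ - β₁) * signedDensityNumer β₁ β₂ γ x =
      β₁ * β₂ * (4 * γ + (γ * β₂ - β₁) * (β₂ - γ * β₁)) -
        ((γ * β₂ - β₁) * x + (β₁ + γ * β₂)) ^ 2 := by
  unfold signedDensityNumer
  ring

lemma signedDensity_div_self_nonneg_iff (hβ₁ : 0 < β₁) (hβ₂ : β₂ ≠ 0) :
    0 ≤ signedDensity β₁ β₂ (β₁ / β₂) x ↔ x ≤ (β₂ ^ 2 - β₁ ^ 2) / 4 := by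
  rw [signedDensity_nonneg_iff hβ₁.ne' hβ₂, signedDensityNumer_div_self hβ₂,
    mul_nonneg_iff_of_pos_left hβ₁]
  constructor <;> intro h <;> linarith

lemma signedDensity_div_self_pos_iff (hβ₁ : 0 < β₁) (hβ₂ : β₂ ≠ 0) :
    0 < signedDensity β₁ β₂ (β₁ / β₂) x ↔ x < (β₂ ^ 2 - β₁ ^ 2) / 4 := by
  rw [signedDensity_pos_iff hβ₁.ne' hβ₂, signedDensityNumer_div_self hβ₂,
    mul_pos_iff_of_pos_left hβ₁]
  constructor <;> intro h <;> linarith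

lemma exists_signedDensity_nonneg_iff_mem_Icc (hβ₁ : 0 < β₁) (hβ₂ : 0 < β₂)
    (hγ₁ : β₁ < γ * β₂) (hγ₂ : γ * β₁ < β₂) :
    ∃ l r : ℝ, l < r ∧ (∀ x, 0 ≤ signedDensity β₁ β₂ γ x ↔ x ∈ Icc l r) ∧
      (∀ x, 0 < signedDensity β₁ β₂ γ x ↔ x ∈ Ioo l r) := by
  set a := γ * β₂ - β₁
  set b := β₁ + γ * β₂
  set D := β₁ * β₂ * (4 * γ + a * (β₂ - γ * β₁))
  have ha : 0 < a := sub_pos.mpr hγ₁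
  have hγ : 0 < γ := pos_of_mul_pos_left (hβ₁.trans hγ₁) hβ₂.le
  have hD : 0 < D := by have := sub_pos.mpr hγ₂; positivity
  set s := √D
  have hs : 0 < s := sqrt_pos.mpr hD
  have hsq : ∀ x, a * signedDensityNumer β₁ β₂ γ x = s ^ 2 - (a * x + b) ^ 2 := fun x => by
    rw [sq_sqrt hD.le, mul_signedDensityNumer_eq_sub_sq]
  refine ⟨(-b - s) / a, (-b + s) / a, by gcongr; linarith, fun x => ?_, fun x => ?_⟩
  · rw [signedDensity_nonneg_iff hβ₁.ne' hβ₂.ne', ← mul_nonneg_iff_of_pos_left ha, hsq,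
      sub_sq_nonneg_iff_mem_Icc ha hs.le]
  · rw [signedDensity_pos_iff hβ₁.ne' hβ₂.ne', ← mul_pos_iff_of_pos_left ha, hsq,
      sub_sq_pos_iff_mem_Ioo ha hs.le]

end

/-- **Second transition and Phase 3 for the signed equilibrium measure (`β₁ < β₂`).**
With `f_γ(x) = (1/π)(β₁/((x+1)² + β₁²) − γβ₂/((x−1)² + β₂²))`:
(a) for `γ = β₁/β₂` there is `A₁` with `f_γ(x) ≥ 0 ↔ x ≤ A₁`, so the support of the
positive part of the signed equilibrium measure is `(−∞, A₁]`;
(b) for `γ ∈ (β₁/β₂, 1)` there are `Ã₂ < A₁` with `f_γ(x) ≥ 0 ↔ x ∈ [Ã₂, A₁]`, so that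
support is the compact interval `[Ã₂, A₁]`. -/
theorem signed_measure_second_transition_and_phase_three
    (β₁ β₂ : ℝ) (hβ₁ : 0 < β₁) (hβ₁₂ : β₁ < β₂)
    (f : ℝ → ℝ → ℝ)
    (hf : ∀ γ x, f γ x = (1 / π) *
      (β₁ / ((x + 1) ^ 2 + β₁ ^ 2) - γ * β₂ / ((x - 1) ^ 2 + β₂ ^ 2))) :
    (∃ A₁ : ℝ, (∀ x : ℝ, 0 ≤ f (β₁ / β₂) x ↔ x ≤ A₁) ∧
      closure {x : ℝ | 0 < f (β₁ / β₂) x} = Iic A₁) ∧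
    (∀ γ : ℝ, β₁ / β₂ < γ → γ < 1 →
      ∃ A₂' A₁ : ℝ, A₂' < A₁ ∧ (∀ x : ℝ, 0 ≤ f γ x ↔ x ∈ Icc A₂' A₁) ∧
        closure {x : ℝ | 0 < f γ x} = Icc A₂' A₁) := by
  obtain rfl : f = signedDensity β₁ β₂ := funext₂ hf
  have hβ₂ : 0 < β₂ := hβ₁.trans hβ₁₂
  refine ⟨⟨(β₂ ^ 2 - β₁ ^ 2) / 4, fun x => signedDensity_div_self_nonneg_iff hβ₁ hβ₂.ne', ?_⟩,
    fun γ hγ₁ hγ₂ => ?_⟩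
  · rw [← closure_Iio]
    exact congrArg closure (Set.ext fun x => signedDensity_div_self_pos_iff hβ₁ hβ₂.ne')
  · have hγβ₁ : β₁ < γ * β₂ := (div_lt_iff₀ hβ₂).mp hγ₁
    have hγβ₂ : γ * β₁ < β₂ := by nlinarith
    obtain ⟨l, r, hlr, hnonneg, hpos⟩ :=
      exists_signedDensity_nonneg_iff_mem_Icc hβ₁ hβ₂ hγβ₁ hγβ₂
    exact ⟨l, r, hlr, hnonneg, (congrArg closure (Set.ext hpos)).trans (closure_Ioo hlr.ne)⟩
end

section
/- (Principle of descent for measures with unbounded supports.) Let (μ_n) be a sequence of finite positive Borel measures on ℂ which is log-tight, i.e., for every ε > 0 there is a compact set K ⊂ ℂ such that ∫_{ℂ∖K} log(1 + |t|) dμ_n(t) ≤ ε for all n, and assume μ_n converges weak-* to a finite positive measure μ. Then for every z ∈ ℂ, V^μ(z) ≤ lim inf_n V^{μ_n}(z). More generally, if z_n → z* in ℂ, then V^μ(z*) ≤ lim inf_n V^{μ_n}(z_n). -/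
/-!
Write `V^ν(z) = A(ν, z) - B(ν, z)` with `A = ∫ (log (1/|z - t|))⁺ dν` and
`B = ∫ (log |z - t|)⁺ dν`. The part `A` is lower semicontinuous along `(μ_n, z_n)`: its
integrand is the increasing limit in `k` of the compactly supported continuous kernels
`min (k |z - t|) (log (1/|z - t|))⁺`, whose integrals converge along the sequence because they
depend uniformly continuously on `z` and the masses of the `μ_n` stay bounded. The part `B` is
upper semicontinuous: cut off outside a large ball, its kernel is continuous with compact support,
and beyond the ball `(log |z_n - t|)⁺ ≤ 2 log (1 + |t|)`, whose integral log-tightness makes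
uniformly small. Log-tightness also gives the mass bound and `∫ log (1 + |t|) dμ < ∞`, so that
`B(μ, z*)` is finite and the two semicontinuities combine.
-/

open MeasureTheory Real Filter
open scoped ENNReal

/-- The logarithmic potential `V^μ(z) = ∫ log (1/|z − t|) dμ(t)` of a positive measure
on `ℂ`, with values in `(−∞, +∞]`: the positive part of the integrand is integrated as
a lower integral, and the negative part (which is integrable whenever `μ` integrates
`log (1 + |t|)`) as a Bochner integral. -/
noncomputable def logPot (μ : Measure ℂ) (z : ℂ) : EReal :=
  ((∫⁻ t, ENNReal.ofReal (-Real.log (‖z - t‖)) ∂μ : ℝ≥0∞) : EReal)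
    - ((∫ t, max (Real.log (‖z - t‖)) 0 ∂μ : ℝ) : EReal)

open scoped Topology

theorem Real.lipschitzOnWith_log_Ici_one : LipschitzOnWith 1 log (Set.Ici 1) := by
  refine (convex_Ici 1).lipschitzOnWith_of_nnnorm_deriv_le
    (fun x hx => differentiableAt_log (by linarith [Set.mem_Ici.1 hx])) fun x hx => ?_
  have hx : (1 : ℝ) ≤ x := hx
  rw [deriv_log, ← NNReal.coe_le_coe, coe_nnnorm, NNReal.coe_one, norm_inv, Real.norm_eq_abs,
    abs_of_pos (by linarith)]
  exact inv_le_one_of_one_le₀ hx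

theorem Real.lipschitzWith_posLog : LipschitzWith 1 log⁺ := by
  refine LipschitzWith.of_dist_le_mul fun x y => ?_
  have hmax : ∀ u : ℝ, log⁺ u = log (max 1 |u|) := fun u => by
    rw [← posLog_abs, posLog_eq_log_max_one (abs_nonneg u)]
  rw [hmax, hmax, NNReal.coe_one, one_mul]
  calc dist (log (max 1 |x|)) (log (max 1 |y|)) ≤ dist (max 1 |x|) (max 1 |y|) := by
        simpa using lipschitzOnWith_log_Ici_one.dist_le_mul _ (le_max_left 1 |x|) _
          (le_max_left 1 |y|)
    _ ≤ dist |x| |y| := by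
        simpa only [Real.dist_eq, max_comm (1 : ℝ)] using abs_max_sub_max_le_abs |x| |y| 1
    _ ≤ dist x y := by simpa only [Real.dist_eq] using abs_abs_sub_abs_le_abs_sub x y

/-- The factor `k * |r|` makes the truncation continuous at `0`, where `log⁺ r⁻¹` blows up
but takes Lean's junk value `log⁺ 0⁻¹ = 0`. -/
noncomputable def truncPosLogInv (k : ℕ) (r : ℝ) : ℝ := min (k * |r|) (log⁺ r⁻¹)

lemma truncPosLogInv_nonneg (k : ℕ) (r : ℝ) : 0 ≤ truncPosLogInv k r :=
  le_min (by positivity) (posLog_nonneg)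

lemma truncPosLogInv_le (k : ℕ) (r : ℝ) : truncPosLogInv k r ≤ log⁺ r⁻¹ := min_le_right _ _

lemma monotone_truncPosLogInv : Monotone truncPosLogInv := fun _ _ hkl r =>
  min_le_min_right _ (mul_le_mul_of_nonneg_right (Nat.cast_le.2 hkl) (abs_nonneg r))

lemma continuous_truncPosLogInv (k : ℕ) : Continuous (truncPosLogInv k) := by
  refine continuous_iff_continuousAt.2 fun r => ?_
  rcases eq_or_ne r 0 with rfl | hr
  · have hbound : Tendsto (fun r : ℝ => (k : ℝ) * |r|) (𝓝 0) (𝓝 0) :=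
      (by fun_prop : Continuous fun r : ℝ => (k : ℝ) * |r|).tendsto' 0 0 (by simp)
    rw [ContinuousAt, show truncPosLogInv k 0 = 0 by simp [truncPosLogInv]]
    exact tendsto_of_tendsto_of_tendsto_of_le_of_le tendsto_const_nhds hbound
      (truncPosLogInv_nonneg k) (fun r => min_le_left _ _)
  · exact ((continuous_const.mul continuous_abs).continuousAt).min
      (continuous_posLog.continuousAt.comp (continuousAt_inv₀ hr))

lemma truncPosLogInv_eq_zero {k : ℕ} {r : ℝ} (hr : 1 ≤ |r|) : truncPosLogInv k r = 0 := by
  have : log⁺ r⁻¹ = 0 := (posLog_eq_zero_iff _).2 (by rw [abs_inv]; exact inv_le_one_of_one_le₀ hr)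
  rw [truncPosLogInv, this, min_eq_right (by positivity)]

lemma hasCompactSupport_truncPosLogInv (k : ℕ) : HasCompactSupport (truncPosLogInv k) :=
  HasCompactSupport.intro (isCompact_closedBall 0 1) fun r hr => truncPosLogInv_eq_zero <| by
    rw [Metric.mem_closedBall, Real.dist_eq, sub_zero, not_le] at hr
    exact hr.le

lemma iSup_ofReal_truncPosLogInv (r : ℝ) :
    ⨆ k : ℕ, ENNReal.ofReal (truncPosLogInv k r) = ENNReal.ofReal (-log r) := by
  have hpos : ENNReal.ofReal (-log r) = ENNReal.ofReal (log⁺ r⁻¹) := by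
    rw [posLog, ENNReal.ofReal_max, ENNReal.ofReal_zero, max_eq_right zero_le, log_inv]
  rw [hpos]
  refine le_antisymm (iSup_le fun k => ENNReal.ofReal_le_ofReal (truncPosLogInv_le k r)) ?_
  rcases eq_or_ne r 0 with rfl | hr
  · simp
  obtain ⟨k, hk⟩ := exists_nat_ge (log⁺ r⁻¹ / |r|)
  have hk' : log⁺ r⁻¹ ≤ k * |r| := (div_le_iff₀ (abs_pos.2 hr)).1 hk
  exact le_iSup_of_le k (by rw [truncPosLogInv, min_eq_right hk'])

theorem TendstoUniformly.mul_right_of_abs_le_one {ι α : Type*} {l : Filter ι} {F : ι → α → ℝ}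
    {f c : α → ℝ} (h : TendstoUniformly F f l) (hc : ∀ t, |c t| ≤ 1) :
    TendstoUniformly (fun n t => F n t * c t) (fun t => f t * c t) l := by
  rw [Metric.tendstoUniformly_iff] at h ⊢
  intro ε hε
  filter_upwards [h ε hε] with n hn t
  rw [Real.dist_eq, ← sub_mul, abs_mul, ← Real.dist_eq]
  exact (mul_le_of_le_one_right dist_nonneg (hc t)).trans_lt (hn t)

section NormedGroup

variable {E : Type*} [NormedAddCommGroup E]

lemma hasCompactSupport_comp_norm_sub [ProperSpace E] {φ : ℝ → ℝ} (hφ : HasCompactSupport φ)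
    (z : E) : HasCompactSupport fun t => φ ‖z - t‖ := by
  obtain ⟨r, hr⟩ := hφ.isBounded.subset_closedBall 0
  refine HasCompactSupport.intro (isCompact_closedBall z r) fun t ht => ?_
  refine image_eq_zero_of_notMem_tsupport fun h => ht ?_
  simpa [dist_eq_norm', Real.dist_eq] using hr h

lemma tendstoUniformly_comp_norm_sub {φ : ℝ → ℝ} (hφ : UniformContinuous φ) {ι : Type*}
    {l : Filter ι} {z : ι → E} {z₀ : E} (hz : Tendsto z l (𝓝 z₀)) :
    TendstoUniformly (fun n t => φ ‖z n - t‖) (fun t => φ ‖z₀ - t‖) l := by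
  rw [Metric.tendstoUniformly_iff]
  intro ε hε
  obtain ⟨δ, hδ, hφδ⟩ := Metric.uniformContinuous_iff.1 hφ ε hε
  filter_upwards [Metric.tendsto_nhds.1 hz δ hδ] with n hn t
  refine hφδ (lt_of_le_of_lt ?_ hn)
  calc dist ‖z₀ - t‖ ‖z n - t‖ ≤ ‖(z₀ - t) - (z n - t)‖ := abs_norm_sub_norm_le _ _
    _ = dist (z n) z₀ := by rw [sub_sub_sub_cancel_right, dist_eq_norm']

lemma posLog_norm_sub_le_two_mul_log {z t : E} (h : ‖z‖ ≤ ‖t‖) :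
    log⁺ ‖z - t‖ ≤ 2 * log (1 + ‖t‖) := by
  have hsq : ‖z - t‖ ≤ (1 + ‖t‖) ^ 2 := by
    nlinarith [norm_sub_le z t, norm_nonneg t]
  calc log⁺ ‖z - t‖ ≤ log⁺ ((1 + ‖t‖) ^ 2) := posLog_le_posLog (norm_nonneg _) hsq
    _ = 2 * log (1 + ‖t‖) := by
      have h1 : 1 ≤ |1 + ‖t‖| := by rw [abs_of_nonneg (by positivity)]; linarith [norm_nonneg t]
      rw [posLog_pow, posLog_eq_log h1, Nat.cast_ofNat]

lemma posLog_norm_sub_le (z t : E) : log⁺ ‖z - t‖ ≤ log⁺ ‖z‖ + log (1 + ‖t‖) + log 2 := by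
  have hlog : log⁺ ‖t‖ ≤ log (1 + ‖t‖) := by
    rw [posLog_eq_log_max_one (norm_nonneg t)]
    exact log_le_log (by positivity) (max_le (by linarith [norm_nonneg t]) (by linarith))
  have := posLog_norm_add_le z (-t)
  rw [norm_neg, ← sub_eq_add_neg] at this
  linarith

noncomputable def ballCutoff (R : ℝ) (t : E) : ℝ := max 0 (min 1 (R + 1 - ‖t‖))

lemma ballCutoff_nonneg (R : ℝ) (t : E) : 0 ≤ ballCutoff R t := le_max_left _ _

lemma ballCutoff_le_one (R : ℝ) (t : E) : ballCutoff R t ≤ 1 :=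
  max_le zero_le_one (min_le_left _ _)

lemma ballCutoff_eq_one {R : ℝ} {t : E} (h : ‖t‖ ≤ R) : ballCutoff R t = 1 := by
  rw [ballCutoff, min_eq_left (by linarith), max_eq_right zero_le_one]

lemma ballCutoff_mono {R R' : ℝ} (h : R ≤ R') (t : E) : ballCutoff R t ≤ ballCutoff R' t :=
  max_le_max le_rfl (min_le_min le_rfl (by linarith))

lemma continuous_ballCutoff (R : ℝ) : Continuous (ballCutoff (E := E) R) := by
  unfold ballCutoff; fun_prop

lemma hasCompactSupport_ballCutoff [ProperSpace E] (R : ℝ) :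
    HasCompactSupport (ballCutoff (E := E) R) :=
  HasCompactSupport.intro (isCompact_closedBall 0 (R + 1)) fun t ht => by
    rw [Metric.mem_closedBall, dist_zero_right, not_le] at ht
    rw [ballCutoff, max_eq_left (min_le_of_right_le (by linarith))]

lemma iSup_ofReal_mul_ballCutoff {a : ℝ} (ha : 0 ≤ a) (t : E) :
    ⨆ k : ℕ, ENNReal.ofReal (a * ballCutoff k t) = ENNReal.ofReal a := by
  obtain ⟨k, hk⟩ := exists_nat_ge ‖t‖
  refine le_antisymm (iSup_le fun k => ENNReal.ofReal_le_ofReal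
    (mul_le_of_le_one_right ha (ballCutoff_le_one _ t))) (le_iSup_of_le k ?_)
  rw [ballCutoff_eq_one hk, mul_one]

lemma continuous_posLog_norm_sub_mul_ballCutoff (R : ℝ) (z : E) :
    Continuous fun t => log⁺ ‖z - t‖ * ballCutoff R t :=
  (continuous_posLog.comp (by fun_prop)).mul (continuous_ballCutoff R)

end NormedGroup

section Vague

variable {X : Type*} [TopologicalSpace X] [MeasurableSpace X]

def TendstoVaguely (μs : ℕ → Measure X) (μ : Measure X) : Prop :=
  ∀ f : X → ℝ, Continuous f → HasCompactSupport f →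
    Tendsto (fun n => ∫ t, f t ∂(μs n)) atTop (nhds (∫ t, f t ∂μ))

variable [OpensMeasurableSpace X] {μs : ℕ → Measure X} {μ : Measure X}
  [∀ n, IsFiniteMeasure (μs n)]

theorem TendstoVaguely.tendsto_integral_of_tendstoUniformly (hμ : TendstoVaguely μs μ) {C : ℝ}
    (hC : ∀ᶠ n in atTop, (μs n).real Set.univ ≤ C) {F : ℕ → X → ℝ} {f : X → ℝ}
    (hFf : TendstoUniformly F f atTop) (hF : ∀ n, Integrable (F n) (μs n))
    (hf : Continuous f) (hfs : HasCompactSupport f) :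
    Tendsto (fun n => ∫ t, F n t ∂(μs n)) atTop (𝓝 (∫ t, f t ∂μ)) := by
  have hfi : ∀ n, Integrable f (μs n) := fun n => hf.integrable_of_hasCompactSupport hfs
  suffices h : Tendsto (fun n => ∫ t, F n t ∂(μs n) - ∫ t, f t ∂(μs n)) atTop (𝓝 0) by
    simpa using h.add (hμ f hf hfs)
  rw [Metric.tendsto_nhds]
  intro ε hε
  have hC' : 0 < |C| + 1 := by positivity
  filter_upwards [Metric.tendstoUniformly_iff.1 hFf (ε / (|C| + 1)) (by positivity), hC]
    with n hn hCn
  rw [dist_zero_right, ← integral_sub (hF n) (hfi n)]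
  calc ‖∫ t, F n t - f t ∂(μs n)‖ ≤ ε / (|C| + 1) * (μs n).real Set.univ :=
        norm_integral_le_of_norm_le_const <| .of_forall fun t => by
          rw [← dist_eq_norm, dist_comm]; exact (hn t).le
    _ ≤ ε / (|C| + 1) * |C| := by gcongr; exact hCn.trans (le_abs_self C)
    _ < ε := by
      rw [div_mul_eq_mul_div, div_lt_iff₀ hC']
      nlinarith

/-- Fatou's lemma along a vaguely convergent sequence: `F k n` is the `k`-th approximant of `G n`,
and converges uniformly in `n` to the `k`-th approximant `f k` of `g`. -/
theorem TendstoVaguely.lintegral_le_liminf_of_iSup [IsFiniteMeasure μ] (hμ : TendstoVaguely μs μ)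
    {C : ℝ} (hC : ∀ᶠ n in atTop, (μs n).real Set.univ ≤ C)
    {F : ℕ → ℕ → X → ℝ} {f : ℕ → X → ℝ} {G : ℕ → X → ℝ≥0∞} {g : X → ℝ≥0∞}
    (hFf : ∀ k, TendstoUniformly (F k) (f k) atTop) (hF : ∀ k n, Integrable (F k n) (μs n))
    (hF0 : ∀ k n t, 0 ≤ F k n t) (hFG : ∀ k n t, ENNReal.ofReal (F k n t) ≤ G n t)
    (hf : ∀ k, Continuous (f k)) (hfs : ∀ k, HasCompactSupport (f k))
    (hfmono : Monotone f) (hfg : ∀ t, ⨆ k, ENNReal.ofReal (f k t) = g t) :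
    ∫⁻ t, g t ∂μ ≤ liminf (fun n => ∫⁻ t, G n t ∂(μs n)) atTop := by
  simp_rw [← hfg]
  rw [lintegral_iSup (fun k => (hf k).measurable.ennreal_ofReal)
    fun k l hkl t => ENNReal.ofReal_le_ofReal (hfmono hkl t)]
  refine iSup_le fun k => ?_
  have hlim := (ENNReal.continuous_ofReal.tendsto _).comp
    (hμ.tendsto_integral_of_tendstoUniformly hC (hFf k) (hF k) (hf k) (hfs k))
  have hf0 : ∀ t, 0 ≤ f k t := fun t => ge_of_tendsto' ((hFf k).tendsto_at t) (hF0 k · t)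
  rw [← ofReal_integral_eq_lintegral_ofReal ((hf k).integrable_of_hasCompactSupport (hfs k))
    (.of_forall hf0), ← hlim.liminf_eq]
  refine liminf_le_liminf (.of_forall fun n => ?_)
  rw [Function.comp_apply, ofReal_integral_eq_lintegral_ofReal (hF k n) (.of_forall (hF0 k n))]
  exact lintegral_mono (hFG k n)

end Vague

section LogTight

variable {E : Type*} [NormedAddCommGroup E] [MeasurableSpace E]

def LogTight (μs : ℕ → Measure E) : Prop :=
  ∀ ε : ℝ, 0 < ε → ∃ K : Set E, IsCompact K ∧ ∀ n,
    (∫⁻ t in Kᶜ, ENNReal.ofReal (Real.log (1 + ‖t‖)) ∂(μs n)) ≤ ENNReal.ofReal ε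

variable {μs : ℕ → Measure E} {μ : Measure E}

theorem LogTight.exists_radius (ht : LogTight μs) {ε : ℝ} (hε : 0 < ε) (R₀ : ℝ) :
    ∃ R, R₀ ≤ R ∧ ∀ n,
      ∫⁻ t in (Metric.closedBall 0 R)ᶜ, ENNReal.ofReal (log (1 + ‖t‖)) ∂(μs n) ≤
        ENNReal.ofReal ε := by
  obtain ⟨K, hK, hKε⟩ := ht ε hε
  obtain ⟨R, hR⟩ := hK.isBounded.subset_closedBall 0
  refine ⟨max R₀ R, le_max_left _ _, fun n => (lintegral_mono_set ?_).trans (hKε n)⟩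
  exact Set.compl_subset_compl.2 (hR.trans (Metric.closedBall_subset_closedBall (le_max_right _ _)))

theorem lintegral_posLog_norm_sub_lt_top [IsFiniteMeasure μ]
    (hw : ∫⁻ t, ENNReal.ofReal (log (1 + ‖t‖)) ∂μ < ∞)
    (z : E) : ∫⁻ t, ENNReal.ofReal (log⁺ ‖z - t‖) ∂μ < ∞ := by
  calc ∫⁻ t, ENNReal.ofReal (log⁺ ‖z - t‖) ∂μ
      ≤ ∫⁻ t, ENNReal.ofReal (log⁺ ‖z‖ + log 2) + ENNReal.ofReal (log (1 + ‖t‖)) ∂μ :=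
        lintegral_mono fun t => by
          rw [← ENNReal.ofReal_add (add_nonneg posLog_nonneg (log_nonneg one_le_two))
            (log_nonneg (by linarith [norm_nonneg t]))]
          exact ENNReal.ofReal_le_ofReal (by linarith [posLog_norm_sub_le z t])
    _ < ∞ := by
      rw [lintegral_add_left measurable_const, lintegral_const]
      exact ENNReal.add_lt_top.2 ⟨by finiteness, hw⟩

lemma lintegral_log_one_add_norm_le [OpensMeasurableSpace E] (ν : Measure E) (R : ℝ) :
    ∫⁻ t, ENNReal.ofReal (log (1 + ‖t‖)) ∂ν ≤ ENNReal.ofReal (log (1 + R)) * ν Set.univ +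
      ∫⁻ t in (Metric.closedBall 0 R)ᶜ, ENNReal.ofReal (log (1 + ‖t‖)) ∂ν := by
  rw [← lintegral_add_compl _ measurableSet_closedBall]
  gcongr
  calc ∫⁻ t in Metric.closedBall 0 R, ENNReal.ofReal (log (1 + ‖t‖)) ∂ν
      ≤ ∫⁻ _ in Metric.closedBall 0 R, ENNReal.ofReal (log (1 + R)) ∂ν :=
        setLIntegral_mono measurable_const fun t ht => ENNReal.ofReal_le_ofReal <|
          log_le_log (by positivity) (by simpa using Metric.mem_closedBall.1 ht)
    _ ≤ ENNReal.ofReal (log (1 + R)) * ν Set.univ := by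
        rw [setLIntegral_const]
        gcongr
        exact Set.subset_univ _

variable [OpensMeasurableSpace E] [ProperSpace E] [∀ n, IsFiniteMeasure (μs n)]

theorem LogTight.exists_eventually_measureReal_univ_le (ht : LogTight μs)
    (hμ : TendstoVaguely μs μ) : ∃ C, ∀ᶠ n in atTop, (μs n).real Set.univ ≤ C := by
  obtain ⟨R, hR2, hR⟩ := ht.exists_radius one_pos 2
  -- Beyond radius `2` the weight `log (1 + ‖t‖)` is at least `1`, so it dominates the mass.
  have htail : ∀ n, (μs n).real (Metric.closedBall 0 R)ᶜ ≤ 1 := fun n => by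
    refine ENNReal.toReal_le_of_le_ofReal zero_le_one ((setLIntegral_one _).symm.trans_le
      ((setLIntegral_mono (by fun_prop) fun t ht => ?_).trans (hR n)))
    rw [Set.mem_compl_iff, Metric.mem_closedBall, dist_zero_right, not_le] at ht
    rw [← ENNReal.ofReal_one]
    refine ENNReal.ofReal_le_ofReal ((le_log_iff_exp_le (by positivity)).2 ?_)
    linarith [exp_one_lt_d9]
  have hball : ∀ n, (μs n).real (Metric.closedBall 0 R) ≤ ∫ t, ballCutoff R t ∂(μs n) := by
    intro n
    rw [← integral_indicator_one measurableSet_closedBall]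
    refine integral_mono ((integrable_const 1).indicator measurableSet_closedBall)
      ((continuous_ballCutoff R).integrable_of_hasCompactSupport (hasCompactSupport_ballCutoff R))
      fun t => ?_
    by_cases h : t ∈ Metric.closedBall 0 R
    · rw [Set.indicator_of_mem h, Pi.one_apply,
        ballCutoff_eq_one (by rwa [Metric.mem_closedBall, dist_zero_right] at h)]
    · rw [Set.indicator_of_notMem h]; exact ballCutoff_nonneg R t
  refine ⟨(∫ t, ballCutoff R t ∂μ + 1) + 1, ?_⟩
  filter_upwards [(hμ _ (continuous_ballCutoff R) (hasCompactSupport_ballCutoff R)).eventually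
    (gt_mem_nhds (lt_add_one _))] with n hn
  rw [← measureReal_add_measureReal_compl measurableSet_closedBall]
  linarith [hball n, htail n]

end LogTight

section Descent

variable {E : Type*} [NormedAddCommGroup E] [MeasurableSpace E] [OpensMeasurableSpace E]
  [ProperSpace E] {μs : ℕ → Measure E} {μ : Measure E} [∀ n, IsFiniteMeasure (μs n)]
  [IsFiniteMeasure μ]

theorem LogTight.lintegral_log_one_add_norm_lt_top (ht : LogTight μs)
    (hμ : TendstoVaguely μs μ) : ∫⁻ t, ENNReal.ofReal (log (1 + ‖t‖)) ∂μ < ∞ := by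
  obtain ⟨C, hC⟩ := ht.exists_eventually_measureReal_univ_le hμ
  obtain ⟨R, -, hR⟩ := ht.exists_radius one_pos 0
  have hw : Continuous fun t : E => log (1 + ‖t‖) :=
    (by fun_prop : Continuous fun t : E => 1 + ‖t‖).log fun t => by positivity
  have hw0 : ∀ t : E, 0 ≤ log (1 + ‖t‖) := fun t => log_nonneg (by linarith [norm_nonneg t])
  have hcut : ∀ k : ℕ, Continuous fun t : E => log (1 + ‖t‖) * ballCutoff k t := fun k =>
    hw.mul (continuous_ballCutoff _)
  have hfatou := hμ.lintegral_le_liminf_of_iSup hC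
    (F := fun k _ t => log (1 + ‖t‖) * ballCutoff k t)
    (G := fun _ t => ENNReal.ofReal (log (1 + ‖t‖)))
    (fun k => tendstoUniformly_iff_tendsto.2 (tendsto_diag_uniformity _ _))
    (fun k n => (hcut k).integrable_of_hasCompactSupport (hasCompactSupport_ballCutoff _).mul_left)
    (fun k n t => mul_nonneg (hw0 t) (ballCutoff_nonneg _ t))
    (fun k n t => ENNReal.ofReal_le_ofReal
      (mul_le_of_le_one_right (hw0 t) (ballCutoff_le_one _ t)))
    hcut (fun k => (hasCompactSupport_ballCutoff _).mul_left)
    (fun k l hkl t => mul_le_mul_of_nonneg_left (ballCutoff_mono (by exact_mod_cast hkl) t)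
      (hw0 t))
    (fun t => iSup_ofReal_mul_ballCutoff (hw0 t) t)
  have hbound : ∀ᶠ n in atTop, ∫⁻ t, ENNReal.ofReal (log (1 + ‖t‖)) ∂(μs n) ≤
      ENNReal.ofReal (log (1 + R)) * ENNReal.ofReal C + ENNReal.ofReal 1 := by
    filter_upwards [hC] with n hn
    refine (lintegral_log_one_add_norm_le (μs n) R).trans (add_le_add ?_ (hR n))
    rw [← ofReal_measureReal]
    gcongr
  exact hfatou.trans_lt ((liminf_le_of_frequently_le' hbound.frequently).trans_lt (by finiteness))

theorem TendstoVaguely.lintegral_neg_log_norm_sub_le_liminf (hμ : TendstoVaguely μs μ) {C : ℝ}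
    (hC : ∀ᶠ n in atTop, (μs n).real Set.univ ≤ C) {z : ℕ → E} {z₀ : E}
    (hz : Tendsto z atTop (𝓝 z₀)) :
    ∫⁻ t, ENNReal.ofReal (-log ‖z₀ - t‖) ∂μ ≤
      liminf (fun n => ∫⁻ t, ENNReal.ofReal (-log ‖z n - t‖) ∂(μs n)) atTop :=
  hμ.lintegral_le_liminf_of_iSup hC (F := fun k n t => truncPosLogInv k ‖z n - t‖)
    (fun k => tendstoUniformly_comp_norm_sub (HasCompactSupport.uniformContinuous_of_continuous
      (hasCompactSupport_truncPosLogInv k) (continuous_truncPosLogInv k)) hz)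
    (fun k n => ((continuous_truncPosLogInv k).comp (by fun_prop)).integrable_of_hasCompactSupport
      (hasCompactSupport_comp_norm_sub (hasCompactSupport_truncPosLogInv k) _))
    (fun k n t => truncPosLogInv_nonneg _ _)
    (fun k n t => by rw [← iSup_ofReal_truncPosLogInv]; exact le_iSup_of_le k le_rfl)
    (fun k => (continuous_truncPosLogInv k).comp (by fun_prop))
    (fun k => hasCompactSupport_comp_norm_sub (hasCompactSupport_truncPosLogInv k) _)
    (fun k l hkl t => monotone_truncPosLogInv hkl _)
    (fun t => iSup_ofReal_truncPosLogInv _)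

lemma integrable_posLog_norm_sub_mul_ballCutoff (ν : Measure E) [IsFiniteMeasure ν] (R : ℝ)
    (z : E) : Integrable (fun t => log⁺ ‖z - t‖ * ballCutoff R t) ν :=
  (continuous_posLog_norm_sub_mul_ballCutoff R z).integrable_of_hasCompactSupport
    (hasCompactSupport_ballCutoff R).mul_left

lemma lintegral_posLog_norm_sub_le_add_tail (ν : Measure E) [IsFiniteMeasure ν] {R : ℝ} {z : E}
    (hz : ‖z‖ ≤ R) :
    ∫⁻ t, ENNReal.ofReal (log⁺ ‖z - t‖) ∂ν ≤
      ENNReal.ofReal (∫ t, log⁺ ‖z - t‖ * ballCutoff R t ∂ν) +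
        2 * ∫⁻ t in (Metric.closedBall 0 R)ᶜ, ENNReal.ofReal (log (1 + ‖t‖)) ∂ν := by
  calc ∫⁻ t, ENNReal.ofReal (log⁺ ‖z - t‖) ∂ν
      ≤ ∫⁻ t, ENNReal.ofReal (log⁺ ‖z - t‖ * ballCutoff R t) + (Metric.closedBall 0 R)ᶜ.indicator
          (fun t => 2 * ENNReal.ofReal (log (1 + ‖t‖))) t ∂ν := lintegral_mono fun t => by
        by_cases htR : ‖t‖ ≤ R
        · simp [ballCutoff_eq_one htR]
        · rw [Set.indicator_of_mem (by simpa using htR), ← ENNReal.ofReal_ofNat 2,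
            ← ENNReal.ofReal_mul zero_le_two]
          exact le_add_left (ENNReal.ofReal_le_ofReal
            (posLog_norm_sub_le_two_mul_log (by linarith)))
    _ = _ := by
        rw [lintegral_add_left
            (continuous_posLog_norm_sub_mul_ballCutoff R z).measurable.ennreal_ofReal,
          lintegral_indicator measurableSet_closedBall.compl, lintegral_const_mul' _ _ (by simp),
          ofReal_integral_eq_lintegral_ofReal (integrable_posLog_norm_sub_mul_ballCutoff ν R z)
            (.of_forall fun t => mul_nonneg posLog_nonneg (ballCutoff_nonneg R t))]

theorem LogTight.limsup_lintegral_posLog_norm_sub_le (ht : LogTight μs)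
    (hμ : TendstoVaguely μs μ) {z : ℕ → E} {z₀ : E} (hz : Tendsto z atTop (𝓝 z₀)) :
    limsup (fun n => ∫⁻ t, ENNReal.ofReal (log⁺ ‖z n - t‖) ∂(μs n)) atTop ≤
      ∫⁻ t, ENNReal.ofReal (log⁺ ‖z₀ - t‖) ∂μ := by
  obtain ⟨C, hC⟩ := ht.exists_eventually_measureReal_univ_le hμ
  refine ENNReal.le_of_forall_pos_le_add fun ε hε _ => ?_
  obtain ⟨R, hR, htail⟩ := ht.exists_radius (half_pos hε) (‖z₀‖ + 1)
  have htail' : ∀ n, 2 * ∫⁻ t in (Metric.closedBall 0 R)ᶜ, ENNReal.ofReal (log (1 + ‖t‖)) ∂(μs n)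
      ≤ ε := fun n => by
    grw [htail n, ← ENNReal.ofReal_ofNat 2, ← ENNReal.ofReal_mul zero_le_two,
      mul_div_cancel₀ _ two_ne_zero]
    exact ENNReal.ofReal_coe_nnreal.le
  have hsplit : ∀ᶠ n in atTop, ∫⁻ t, ENNReal.ofReal (log⁺ ‖z n - t‖) ∂(μs n) ≤
      ENNReal.ofReal (∫ t, log⁺ ‖z n - t‖ * ballCutoff R t ∂(μs n)) + ε := by
    filter_upwards [hz.norm.eventually (gt_mem_nhds (lt_add_one ‖z₀‖))] with n hn
    grw [lintegral_posLog_norm_sub_le_add_tail (μs n) (hn.le.trans hR), htail' n]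
  have hconv : Tendsto (fun n => ENNReal.ofReal (∫ t, log⁺ ‖z n - t‖ * ballCutoff R t ∂(μs n)) + ε)
      atTop (𝓝 (ENNReal.ofReal (∫ t, log⁺ ‖z₀ - t‖ * ballCutoff R t ∂μ) + ε)) :=
    ((ENNReal.continuous_ofReal.tendsto _).comp (hμ.tendsto_integral_of_tendstoUniformly hC
      ((tendstoUniformly_comp_norm_sub lipschitzWith_posLog.uniformContinuous hz)
        |>.mul_right_of_abs_le_one fun t => abs_le.2 ⟨by linarith [ballCutoff_nonneg R t],
          ballCutoff_le_one R t⟩)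
      (fun n => integrable_posLog_norm_sub_mul_ballCutoff _ R _)
      (continuous_posLog_norm_sub_mul_ballCutoff R z₀)
      (hasCompactSupport_ballCutoff R).mul_left)).add_const _
  calc limsup (fun n => ∫⁻ t, ENNReal.ofReal (log⁺ ‖z n - t‖) ∂(μs n)) atTop
      ≤ ENNReal.ofReal (∫ t, log⁺ ‖z₀ - t‖ * ballCutoff R t ∂μ) + ε :=
        hconv.limsup_eq ▸ limsup_le_limsup hsplit
    _ ≤ ∫⁻ t, ENNReal.ofReal (log⁺ ‖z₀ - t‖) ∂μ + ε := by
      rw [ofReal_integral_eq_lintegral_ofReal (integrable_posLog_norm_sub_mul_ballCutoff μ R z₀)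
        (.of_forall fun t => mul_nonneg posLog_nonneg (ballCutoff_nonneg R t))]
      gcongr with t
      exact mul_le_of_le_one_right posLog_nonneg (ballCutoff_le_one R t)

end Descent

theorem EReal.coe_ennreal_sub_toReal_le_liminf {α : Type*} {l : Filter α} [l.NeBot] {a b : ℝ≥0∞}
    {u v : α → ℝ≥0∞} (hb : b ≠ ∞) (hu : a ≤ liminf u l) (hv : limsup v l ≤ b) :
    (a : EReal) - (b.toReal : EReal) ≤
      liminf (fun x => (u x : EReal) - ((v x).toReal : EReal)) l := by
  have hu' : (a : EReal) ≤ liminf (fun x => (u x : EReal)) l :=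
    (EReal.coe_ennreal_le_coe_ennreal_iff.2 hu).trans_eq <|
      Monotone.map_liminf_of_continuousAt (fun _ _ => EReal.coe_ennreal_le_coe_ennreal_iff.2) u
        continuous_coe_ennreal_ereal.continuousAt
  have hv' : limsup (fun x => ((v x).toReal : EReal)) l ≤ (b.toReal : EReal) := by
    calc limsup (fun x => ((v x).toReal : EReal)) l ≤ limsup (fun x => (v x : EReal)) l :=
          limsup_le_limsup (.of_forall fun x => by
            dsimp only
            rcases eq_or_ne (v x) ∞ with h | h
            · simp [h]
            · rw [EReal.coe_ennreal_toReal h])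
      _ = ((limsup v l : ℝ≥0∞) : EReal) :=
          (Monotone.map_limsup_of_continuousAt (fun _ _ => EReal.coe_ennreal_le_coe_ennreal_iff.2) v
            continuous_coe_ennreal_ereal.continuousAt).symm
      _ ≤ (b.toReal : EReal) := by
          rw [EReal.coe_ennreal_toReal hb]; exact EReal.coe_ennreal_le_coe_ennreal_iff.2 hv
  calc (a : EReal) - (b.toReal : EReal)
      ≤ liminf (fun x => (u x : EReal)) l - limsup (fun x => ((v x).toReal : EReal)) l :=
        EReal.sub_le_sub hu' hv'
    _ = liminf (fun x => (u x : EReal)) l + liminf (fun x => -((v x).toReal : EReal)) l := by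
        rw [sub_eq_add_neg, ← EReal.liminf_neg]; rfl
    _ ≤ liminf (fun x => (u x : EReal) - ((v x).toReal : EReal)) l := EReal.le_liminf_add

lemma logPot_eq (ν : Measure ℂ) (z : ℂ) :
    logPot ν z = ((∫⁻ t, ENNReal.ofReal (-log ‖z - t‖) ∂ν : ℝ≥0∞) : EReal) -
      ((∫⁻ t, ENNReal.ofReal (log⁺ ‖z - t‖) ∂ν).toReal : EReal) := by
  rw [logPot, integral_eq_lintegral_of_nonneg_ae (f := fun t => max (log ‖z - t‖) 0)
    (.of_forall fun t => le_max_right _ _)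
    ((measurable_log.comp (by fun_prop)).max measurable_const).aestronglyMeasurable]
  simp only [posLog, max_comm]

theorem logPot_le_liminf {μs : ℕ → Measure ℂ} {μ : Measure ℂ} [∀ n, IsFiniteMeasure (μs n)]
    [IsFiniteMeasure μ] (hμ : TendstoVaguely μs μ) (ht : LogTight μs) {z : ℕ → ℂ} {z₀ : ℂ}
    (hz : Tendsto z atTop (𝓝 z₀)) :
    logPot μ z₀ ≤ liminf (fun n => logPot (μs n) (z n)) atTop := by
  obtain ⟨C, hC⟩ := ht.exists_eventually_measureReal_univ_le hμ
  simp only [logPot_eq]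
  exact EReal.coe_ennreal_sub_toReal_le_liminf
    (lintegral_posLog_norm_sub_lt_top (ht.lintegral_log_one_add_norm_lt_top hμ) z₀).ne
    (hμ.lintegral_neg_log_norm_sub_le_liminf hC hz) (ht.limsup_lintegral_posLog_norm_sub_le hμ hz)

/-- **Principle of descent for measures with unbounded supports.** If `(μ_n)` is a
log-tight sequence of finite positive measures on `ℂ` converging weak-* to a finite
measure `μ`, then `V^μ(z) ≤ liminf_n V^{μ_n}(z)` for every `z`, and more generally
`V^μ(z*) ≤ liminf_n V^{μ_n}(z_n)` whenever `z_n → z*`. -/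
theorem principle_of_descent_unbounded
    (μseq : ℕ → Measure ℂ) (hfin : ∀ n, IsFiniteMeasure (μseq n))
    (hlogtight : ∀ ε : ℝ, 0 < ε → ∃ K : Set ℂ, IsCompact K ∧ ∀ n,
      (∫⁻ t in Kᶜ, ENNReal.ofReal (Real.log (1 + ‖t‖)) ∂(μseq n))
        ≤ ENNReal.ofReal ε)
    (μ : Measure ℂ) [IsFiniteMeasure μ]
    (hweak : ∀ f : ℂ → ℝ, Continuous f → HasCompactSupport f →
      Tendsto (fun n => ∫ t, f t ∂(μseq n)) atTop (nhds (∫ t, f t ∂μ)))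
    (zseq : ℕ → ℂ) (zstar : ℂ) (hz : Tendsto zseq atTop (nhds zstar)) :
    (∀ z : ℂ, logPot μ z ≤ liminf (fun n => logPot (μseq n) z) atTop) ∧
    logPot μ zstar ≤ liminf (fun n => logPot (μseq n) (zseq n)) atTop := by
  have := hfin
  exact ⟨fun z => logPot_le_liminf hweak hlogtight tendsto_const_nhds,
    logPot_le_liminf hweak hlogtight hz⟩
end

section
/- Let μ be a finite positive Borel measure on ℝ, absolutely continuous with respect to Lebesgue measure with a continuous density f satisfying 0 ≤ f(x) ≤ M·(1 + |x|)^{−3/2} for all x ∈ ℝ and some constant M > 0. Then: (i) μ integrates the logarithm at infinity, i.e., ∫ log(1 + |x|) dμ(x) < ∞; (ii) there is a constant C such that |V^μ(x)| ≤ μ(ℝ)·log(1 + |x|) + C for all x ∈ ℝ; (iii) the logarithmic energy I(μ) = ∫ V^μ dμ is finite. -/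
open MeasureTheory Real
open scoped ENNReal

/-!
The hypothesis says `μ ≤ M • ρ`, where `ρ` has density `(1 + |x|)^(-3/2)`; so `μ` is finite,
`μ ≤ M • volume`, and `log (1 + |t|)` is `μ`-integrable. Split
`|log |x - t|| = log⁺ |x - t| + log⁺ |x - t|⁻¹`. The far part is at most
`log (1 + |x|) + log (1 + |t|)`. The near part is a translate of the Lebesgue-integrable
function `log⁺ |u|⁻¹`, so its `μ`-integral is at most `M ∫ log⁺ |u|⁻¹`, uniformly in `x`.
Hence `∫ |log |x - t|| dμ(t) ≤ μ(ℝ) log (1 + |x|) + C`; this bounds the potential, makes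
`log |x - y|` integrable for `μ ⊗ μ`, and Fubini identifies the energy with `∫ V^μ dμ`.
-/

noncomputable def logPotR (μ : Measure ℝ) (x : ℝ) : ℝ :=
  ∫ t, Real.log (1 / |x - t|) ∂μ

namespace LogPotential

theorem integrable_posLog_abs_inv : Integrable fun u : ℝ => log⁺ |u|⁻¹ := by
  have hdom : Integrable ((Set.Icc (-1 : ℝ) 1).indicator fun u => |log u|) := by
    rw [integrable_indicator_iff measurableSet_Icc,
      ← intervalIntegrable_iff_integrableOn_Icc_of_le (by norm_num)]
    exact intervalIntegral.intervalIntegrable_log'.abs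
  refine hdom.mono' (by fun_prop) (ae_of_all _ fun u => ?_)
  rw [norm_of_nonneg posLog_nonneg]
  by_cases hu : |u| ≤ 1
  · rw [Set.indicator_of_mem (show u ∈ Set.Icc (-1) 1 from abs_le.1 hu), posLog_apply, log_inv,
      log_abs, ← abs_neg]
    exact max_le (abs_nonneg _) (le_abs_self _)
  · have hinv : |(|u|⁻¹)| ≤ 1 := by
      rw [abs_inv, abs_abs]
      exact inv_le_one_of_one_le₀ (not_le.1 hu).le
    rw [(posLog_eq_zero_iff _).2 hinv]
    exact Set.indicator_nonneg (fun _ _ => abs_nonneg _) u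

theorem abs_log_eq_posLog_add_posLog_inv (y : ℝ) : |log y| = log⁺ y + log⁺ y⁻¹ := by
  linarith [half_mul_log_add_log_abs (x := y), posLog_sub_posLog_inv (x := y)]

theorem posLog_one_add_abs (x : ℝ) : log⁺ (1 + |x|) = log (1 + |x|) :=
  posLog_eq_log (by rw [abs_of_nonneg (by positivity)]; linarith [abs_nonneg x])

theorem abs_log_abs_sub_le (x t : ℝ) :
    |log (|x - t|)| ≤ log (1 + |x|) + log (1 + |t|) + log⁺ |x - t|⁻¹ := by
  have hfar : log⁺ |x - t| ≤ log (1 + |x|) + log (1 + |t|) := by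
    have hle : |x - t| ≤ (1 + |x|) * (1 + |t|) := by
      nlinarith [abs_sub x t, abs_nonneg x, abs_nonneg t]
    calc log⁺ |x - t| ≤ log⁺ ((1 + |x|) * (1 + |t|)) := posLog_le_posLog (abs_nonneg _) hle
      _ ≤ log⁺ (1 + |x|) + log⁺ (1 + |t|) := posLog_mul
      _ = log (1 + |x|) + log (1 + |t|) := by rw [posLog_one_add_abs, posLog_one_add_abs]
  rw [abs_log_eq_posLog_add_posLog_inv]
  linarith

section DominatedByLebesgue

variable {μ : Measure ℝ} {c : ℝ≥0∞}

theorem integrable_posLog_abs_sub_inv (hc : c ≠ ∞) (hμc : μ ≤ c • volume) (x : ℝ) :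
    Integrable (fun t => log⁺ |x - t|⁻¹) μ :=
  ((integrable_posLog_abs_inv.comp_sub_left x).smul_measure hc).mono_measure hμc

theorem integral_posLog_abs_sub_inv_le (hc : c ≠ ∞) (hμc : μ ≤ c • volume) (x : ℝ) :
    ∫ t, log⁺ |x - t|⁻¹ ∂μ ≤ c.toReal * ∫ u, log⁺ |u|⁻¹ := by
  calc ∫ t, log⁺ |x - t|⁻¹ ∂μ ≤ ∫ t, log⁺ |x - t|⁻¹ ∂(c • volume) :=
        integral_mono_measure hμc (ae_of_all _ fun _ => posLog_nonneg)
          ((integrable_posLog_abs_inv.comp_sub_left x).smul_measure hc)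
    _ = c.toReal * ∫ u, log⁺ |u|⁻¹ := by
        rw [integral_smul_measure, integral_sub_left_eq_self (fun u => log⁺ |u|⁻¹),
          smul_eq_mul]

variable [IsFiniteMeasure μ]

theorem integrable_log_abs_sub (hc : c ≠ ∞) (hμc : μ ≤ c • volume)
    (hlog : Integrable (fun t => log (1 + |t|)) μ) (x : ℝ) :
    Integrable (fun t => log (|x - t|)) μ :=
  (((integrable_const _).add hlog).add (integrable_posLog_abs_sub_inv hc hμc x)).mono'
    (measurable_log.comp (by fun_prop)).aestronglyMeasurable
    (ae_of_all _ fun t => abs_log_abs_sub_le x t)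

theorem integral_abs_log_abs_sub_le (hc : c ≠ ∞) (hμc : μ ≤ c • volume)
    (hlog : Integrable (fun t => log (1 + |t|)) μ) (x : ℝ) :
    ∫ t, |log (|x - t|)| ∂μ ≤ μ.real Set.univ * log (1 + |x|) +
      (∫ t, log (1 + |t|) ∂μ + c.toReal * ∫ u, log⁺ |u|⁻¹) := by
  have hsing := integrable_posLog_abs_sub_inv hc hμc x
  have hfar : Integrable (fun t => log (1 + |x|) + log (1 + |t|)) μ :=
    (integrable_const _).add hlog
  calc ∫ t, |log (|x - t|)| ∂μ
      ≤ ∫ t, (log (1 + |x|) + log (1 + |t|) + log⁺ |x - t|⁻¹) ∂μ :=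
        integral_mono (integrable_log_abs_sub hc hμc hlog x).abs
          (hfar.add hsing) fun t => abs_log_abs_sub_le x t
    _ = μ.real Set.univ * log (1 + |x|) + ∫ t, log (1 + |t|) ∂μ +
          ∫ t, log⁺ |x - t|⁻¹ ∂μ := by
        rw [integral_add hfar hsing,
          integral_add (integrable_const _) hlog, integral_const, smul_eq_mul]
    _ ≤ _ := by linarith [integral_posLog_abs_sub_inv_le hc hμc x]

theorem integrable_log_abs_sub_prod (hc : c ≠ ∞) (hμc : μ ≤ c • volume)
    (hlog : Integrable (fun t => log (1 + |t|)) μ) :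
    Integrable (fun p : ℝ × ℝ => log (|p.1 - p.2|)) (μ.prod μ) := by
  have hmeas : AEStronglyMeasurable (fun p : ℝ × ℝ => log (|p.1 - p.2|)) (μ.prod μ) :=
    (measurable_log.comp (by fun_prop)).aestronglyMeasurable
  refine (integrable_prod_iff hmeas).2 ⟨ae_of_all _ (integrable_log_abs_sub hc hμc hlog), ?_⟩
  refine Integrable.mono' (g := fun x => μ.real Set.univ * log (1 + |x|) +
      (∫ t, log (1 + |t|) ∂μ + c.toReal * ∫ u, log⁺ |u|⁻¹))
    ((hlog.const_mul _).add (integrable_const _)) hmeas.norm.integral_prod_right'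
    (ae_of_all _ fun x => ?_)
  simp only [norm_eq_abs]
  rw [abs_of_nonneg (integral_nonneg fun _ => abs_nonneg _)]
  exact integral_abs_log_abs_sub_le hc hμc hlog x

end DominatedByLebesgue

theorem abs_logPotR_le (μ : Measure ℝ) (x : ℝ) :
    |logPotR μ x| ≤ ∫ t, |log (|x - t|)| ∂μ := by
  calc |logPotR μ x| ≤ ∫ t, |log (1 / |x - t|)| ∂μ := abs_integral_le_integral_abs
    _ = ∫ t, |log (|x - t|)| ∂μ := by simp only [one_div, log_inv, abs_neg]

theorem integral_log_inv_abs_sub_prod {μ : Measure ℝ} [SFinite μ]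
    (h : Integrable (fun p : ℝ × ℝ => log (|p.1 - p.2|)) (μ.prod μ)) :
    ∫ p : ℝ × ℝ, log (1 / |p.1 - p.2|) ∂(μ.prod μ) = ∫ x, logPotR μ x ∂μ :=
  integral_prod _ (by simpa only [one_div, log_inv] using h.fun_neg)

section DecayingDensity

noncomputable def powerDecayMeasure (r : ℝ) : Measure ℝ :=
  volume.withDensity fun x => ENNReal.ofReal ((1 + |x|) ^ (-r))

variable {r : ℝ}

theorem integrable_log_one_add_abs_mul_rpow_neg (hr : 1 < r) :
    Integrable fun x : ℝ => log (1 + |x|) * (1 + |x|) ^ (-r) := by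
  set ε := (r - 1) / 2 with hε
  have hε0 : 0 < ε := by rw [hε]; linarith
  have hdom : Integrable fun x : ℝ => ε⁻¹ * (1 + ‖x‖) ^ (-(r - ε)) :=
    (integrable_one_add_norm (by simp; linarith)).const_mul _
  refine hdom.mono' (by fun_prop) (ae_of_all _ fun x => ?_)
  have hx : 0 < 1 + |x| := by positivity
  rw [norm_of_nonneg (mul_nonneg (log_nonneg (by linarith [abs_nonneg x])) (by positivity)),
    norm_eq_abs, neg_sub, rpow_sub hx, rpow_neg hx.le, div_eq_mul_inv]
  calc log (1 + |x|) * ((1 + |x|) ^ r)⁻¹ ≤ (1 + |x|) ^ ε / ε * ((1 + |x|) ^ r)⁻¹ := by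
        gcongr; exact log_le_rpow_div hx.le hε0
    _ = _ := by ring

theorem powerDecayMeasure_le_volume (hr : 0 ≤ r) : powerDecayMeasure r ≤ volume := by
  calc powerDecayMeasure r ≤ volume.withDensity (fun _ => 1) :=
        withDensity_mono (ae_of_all _ fun x => ENNReal.ofReal_le_one.2
          (rpow_le_one_of_one_le_of_nonpos (by linarith [abs_nonneg x]) (by linarith)))
    _ = volume := by rw [withDensity_const, one_smul]

theorem isFiniteMeasure_powerDecayMeasure (hr : 1 < r) : IsFiniteMeasure (powerDecayMeasure r) :=
  isFiniteMeasure_withDensity_ofReal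
    (integrable_one_add_norm (E := ℝ) (by simpa using hr)).hasFiniteIntegral

theorem integrable_log_one_add_abs_powerDecayMeasure (hr : 1 < r) :
    Integrable (fun x => log (1 + |x|)) (powerDecayMeasure r) := by
  rw [powerDecayMeasure, integrable_withDensity_iff_integrable_smul' (by fun_prop)
    (ae_of_all _ fun _ => ENNReal.ofReal_lt_top)]
  have hdens (x : ℝ) : (ENNReal.ofReal ((1 + |x|) ^ (-r))).toReal = (1 + |x|) ^ (-r) :=
    ENNReal.toReal_ofReal (by positivity)
  simp only [hdens, smul_eq_mul]
  simpa only [mul_comm] using integrable_log_one_add_abs_mul_rpow_neg hr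

theorem withDensity_le_smul_powerDecayMeasure {f : ℝ → ℝ} {M : ℝ}
    (hfM : ∀ x, f x ≤ M * (1 + |x|) ^ (-r)) :
    volume.withDensity (fun x => ENNReal.ofReal (f x)) ≤
      ENNReal.ofReal M • powerDecayMeasure r := by
  rw [powerDecayMeasure, ← withDensity_smul' _ _ ENNReal.ofReal_ne_top]
  refine withDensity_mono (ae_of_all _ fun x => ?_)
  calc ENNReal.ofReal (f x) ≤ ENNReal.ofReal (M * (1 + |x|) ^ (-r)) :=
        ENNReal.ofReal_le_ofReal (hfM x)
    _ = _ := ENNReal.ofReal_mul' (by positivity)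

end DecayingDensity

end LogPotential

open LogPotential

theorem finite_energy_of_decaying_density_general
    (f : ℝ → ℝ) (M : ℝ)
    (hfM : ∀ x, f x ≤ M * (1 + |x|) ^ (-(3 : ℝ) / 2))
    (μ : Measure ℝ) (hμ : μ = volume.withDensity (fun x => ENNReal.ofReal (f x))) :
    Integrable (fun x => Real.log (1 + |x|)) μ ∧
    (∃ C : ℝ, ∀ x : ℝ,
      |logPotR μ x| ≤ (μ Set.univ).toReal * Real.log (1 + |x|) + C) ∧
    Integrable (fun p : ℝ × ℝ => Real.log |p.1 - p.2|) (μ.prod μ) ∧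
    (∫ p : ℝ × ℝ, Real.log (1 / |p.1 - p.2|) ∂(μ.prod μ)) = ∫ x, logPotR μ x ∂μ := by
  have hr : (1 : ℝ) < 3 / 2 := by norm_num
  have hc : ENNReal.ofReal M ≠ ∞ := ENNReal.ofReal_ne_top
  have hμρ : μ ≤ ENNReal.ofReal M • powerDecayMeasure (3 / 2) :=
    hμ ▸ withDensity_le_smul_powerDecayMeasure (by simpa only [neg_div] using hfM)
  have := isFiniteMeasure_powerDecayMeasure hr
  have := Measure.smul_finite (powerDecayMeasure (3 / 2)) hc
  have : IsFiniteMeasure μ := isFiniteMeasure_of_le _ hμρ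
  have hμc : μ ≤ ENNReal.ofReal M • volume :=
    hμρ.trans (by gcongr; exact powerDecayMeasure_le_volume (by norm_num))
  have hlog : Integrable (fun x => log (1 + |x|)) μ :=
    ((integrable_log_one_add_abs_powerDecayMeasure hr).smul_measure hc).mono_measure hμρ
  have hprod := integrable_log_abs_sub_prod hc hμc hlog
  exact ⟨hlog,
    ⟨_, fun x => (abs_logPotR_le μ x).trans (integral_abs_log_abs_sub_le hc hμc hlog x)⟩, hprod,
    integral_log_inv_abs_sub_prod hprod⟩

/-- **Finite energy for measures with density decaying like `|x|^{−3/2}`.** If `μ` has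
a continuous Lebesgue density `f` with `0 ≤ f(x) ≤ M (1 + |x|)^{−3/2}`, then:
(i) `μ` integrates the logarithm at infinity; (ii) `|V^μ(x)| ≤ μ(ℝ) log(1+|x|) + C`
for some constant `C`; (iii) the logarithmic energy `I(μ) = ∫ V^μ dμ` is finite. -/
theorem finite_energy_of_decaying_density
    (f : ℝ → ℝ) (hf : Continuous f) (M : ℝ) (hM : 0 < M)
    (hf0 : ∀ x, 0 ≤ f x)
    (hfM : ∀ x, f x ≤ M * (1 + |x|) ^ (-(3 : ℝ) / 2))
    (μ : Measure ℝ) (hμ : μ = volume.withDensity (fun x => ENNReal.ofReal (f x)))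
    (hfin : IsFiniteMeasure μ) :
    Integrable (fun x => Real.log (1 + |x|)) μ ∧
    (∃ C : ℝ, ∀ x : ℝ,
      |logPotR μ x| ≤ (μ Set.univ).toReal * Real.log (1 + |x|) + C) ∧
    Integrable (fun p : ℝ × ℝ => Real.log |p.1 - p.2|) (μ.prod μ) ∧
    (∫ p : ℝ × ℝ, Real.log (1 / |p.1 - p.2|) ∂(μ.prod μ)) = ∫ x, logPotR μ x ∂μ :=
  finite_energy_of_decaying_density_general f M hfM μ hμ
end

section
/- Let β₁, β₂ > 0, z₁ = −1 + β₁·i, z₂ = 1 + β₂·i, x₀ = (β₂² − β₁²)/4, and x₂ = x₀ + (1/4)√((β₂² − β₁²)² + 8(β₁² + β₂² + 2)). Then the constant Γ₁ = (1/(2β₁β₂))((β₁² + β₂² + 4) − √((β₁² + β₂² + 4)² − 4β₁²β₂²)) satisfies the identity Γ₁ = (β₁/β₂)·|z₂ − x₂|²/|z₁ − x₂|², i.e., Γ₁ = (β₁/β₂)·((1 − x₂)² + β₂²)/((1 + x₂)² + β₁²). -/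
/-!
The two discriminants `(β₁² + β₂² + 4)² − 4β₁²β₂²` and `(β₂² − β₁²)² + 8(β₁² + β₂² + 2)` are the
same polynomial `D`, so `Γ₁` and `x₂` are rational in `s = √D`. After clearing denominators,
the identity `Γ₁ = (β₁/β₂)·|z₂ − x₂|²/|z₁ − x₂|²` is a polynomial multiple of `s² − D`, so it
holds for either sign of `s`.
-/

open Real

theorem Complex.sq_norm_sub_ofReal (z : ℂ) (x : ℝ) :
    ‖z - x‖ ^ 2 = (z.re - x) ^ 2 + z.im ^ 2 := by
  rw [Complex.sq_norm, Complex.normSq_apply, Complex.sub_re, Complex.sub_im,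
    Complex.ofReal_re, Complex.ofReal_im, sub_zero]
  ring

theorem transition_discriminant_eq (β₁ β₂ : ℝ) :
    (β₁ ^ 2 + β₂ ^ 2 + 4) ^ 2 - 4 * β₁ ^ 2 * β₂ ^ 2
      = (β₂ ^ 2 - β₁ ^ 2) ^ 2 + 8 * (β₁ ^ 2 + β₂ ^ 2 + 2) := by
  ring

theorem transition_root_eq_weight_ratio {β₁ β₂ s x : ℝ} (hβ₁ : β₁ ≠ 0) (hβ₂ : β₂ ≠ 0)
    (hs : s ^ 2 = (β₂ ^ 2 - β₁ ^ 2) ^ 2 + 8 * (β₁ ^ 2 + β₂ ^ 2 + 2))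
    (hx : x = (β₂ ^ 2 - β₁ ^ 2) / 4 + 1 / 4 * s) :
    1 / (2 * β₁ * β₂) * (β₁ ^ 2 + β₂ ^ 2 + 4 - s)
      = β₁ / β₂ * ((1 - x) ^ 2 + β₂ ^ 2) / ((1 + x) ^ 2 + β₁ ^ 2) := by
  have hden : (1 + x) ^ 2 + β₁ ^ 2 ≠ 0 := by positivity
  rw [div_mul_eq_mul_div, eq_div_iff hden]
  subst hx
  field_simp
  linear_combination (β₁ ^ 2 - β₂ ^ 2 - 4 - s) * hs

/-- **Alternative expression for the first transition value `Γ₁`.** With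
`z₁ = −1 + β₁ i`, `z₂ = 1 + β₂ i`, `x₀ = (β₂² − β₁²)/4` and
`x₂ = x₀ + (1/4)√((β₂² − β₁²)² + 8(β₁² + β₂² + 2))`, the constant
`Γ₁ = (1/(2β₁β₂))((β₁² + β₂² + 4) − √((β₁² + β₂² + 4)² − 4β₁²β₂²))` satisfies
`Γ₁ = (β₁/β₂)·|z₂ − x₂|²/|z₁ − x₂|² = (β₁/β₂)·((1 − x₂)² + β₂²)/((1 + x₂)² + β₁²)`. -/
theorem gamma_one_identity
    (β₁ β₂ : ℝ) (hβ₁ : 0 < β₁) (hβ₂ : 0 < β₂)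
    (z₁ z₂ : ℂ) (hz₁ : z₁ = -1 + (β₁ : ℂ) * Complex.I)
    (hz₂ : z₂ = 1 + (β₂ : ℂ) * Complex.I)
    (x₀ x₂ : ℝ) (hx₀ : x₀ = (β₂ ^ 2 - β₁ ^ 2) / 4)
    (hx₂ : x₂ = x₀ + (1 / 4) *
      Real.sqrt ((β₂ ^ 2 - β₁ ^ 2) ^ 2 + 8 * (β₁ ^ 2 + β₂ ^ 2 + 2)))
    (Γ₁ : ℝ)
    (hΓ₁ : Γ₁ = (1 / (2 * β₁ * β₂)) * ((β₁ ^ 2 + β₂ ^ 2 + 4)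
      - Real.sqrt ((β₁ ^ 2 + β₂ ^ 2 + 4) ^ 2 - 4 * β₁ ^ 2 * β₂ ^ 2))) :
    Γ₁ = (β₁ / β₂) * ‖z₂ - (x₂ : ℂ)‖ ^ 2 / ‖z₁ - (x₂ : ℂ)‖ ^ 2
    ∧ Γ₁ = (β₁ / β₂) * ((1 - x₂) ^ 2 + β₂ ^ 2) / ((1 + x₂) ^ 2 + β₁ ^ 2) := by
  have hs : √((β₂ ^ 2 - β₁ ^ 2) ^ 2 + 8 * (β₁ ^ 2 + β₂ ^ 2 + 2)) ^ 2
      = (β₂ ^ 2 - β₁ ^ 2) ^ 2 + 8 * (β₁ ^ 2 + β₂ ^ 2 + 2) :=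
    Real.sq_sqrt (by positivity)
  have hratio : Γ₁ = β₁ / β₂ * ((1 - x₂) ^ 2 + β₂ ^ 2) / ((1 + x₂) ^ 2 + β₁ ^ 2) := by
    rw [hΓ₁, transition_discriminant_eq]
    exact transition_root_eq_weight_ratio hβ₁.ne' hβ₂.ne' hs (hx₀ ▸ hx₂)
  have hnorm₁ : ‖z₁ - (x₂ : ℂ)‖ ^ 2 = (1 + x₂) ^ 2 + β₁ ^ 2 := by
    rw [Complex.sq_norm_sub_ofReal, hz₁]
    simp only [Complex.add_re, Complex.add_im, Complex.neg_re, Complex.neg_im, Complex.one_re,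
      Complex.one_im, Complex.re_ofReal_mul, Complex.im_ofReal_mul, Complex.I_re, Complex.I_im]
    ring
  have hnorm₂ : ‖z₂ - (x₂ : ℂ)‖ ^ 2 = (1 - x₂) ^ 2 + β₂ ^ 2 := by
    rw [Complex.sq_norm_sub_ofReal, hz₂]
    simp only [Complex.add_re, Complex.add_im, Complex.one_re, Complex.one_im,
      Complex.re_ofReal_mul, Complex.im_ofReal_mul, Complex.I_re, Complex.I_im]
    ring
  exact ⟨by rw [hnorm₁, hnorm₂, hratio], hratio⟩
end

section
/- Let β₁, β₂ > 0, z₁ = −1 + β₁·i, z₂ = 1 + β₂·i, x₀ = (β₂² − β₁²)/4, x₂ = x₀ + (1/4)√((β₂² − β₁²)² + 8(β₁² + β₂² + 2)), Γ₁ = (1/(2β₁β₂))((β₁² + β₂² + 4) − √((β₁² + β₂² + 4)² − 4β₁²β₂²)), and Γ₂ = (β₁/β₂)·|z₂ − x₂|/|z₁ − x₂|. Then 0 < Γ₁ < Γ₂ < min(1, β₁/β₂); in particular β₁·|z₂ − x₂| < β₂·|z₁ − x₂| and |z₂ − x₂| < |z₁ − x₂|. -/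
/-!
The point `x₂` is the positive root of `2x² = (β₂² − β₁²)x + β₁² + β₂² + 2`, and evaluating
this quadratic at `1` shows `x₂ > 1`. Writing `A = |z₁ − x₂|`, `B = |z₂ − x₂|`, so that
`A² = (1 + x₂)² + β₁²` and `B² = (1 − x₂)² + β₂²`, the claims `B < A` and `β₁B < β₂A` become
polynomial inequalities in `x₂` that follow from the quadratic relation. Finally `Γ₁` is the
smaller root of `β₁β₂t² − (β₁² + β₂² + 4)t + β₁β₂`, so `Γ₁ < Γ₂` follows once this quadratic is
negative at `t = Γ₂ = β₁B/(β₂A)`, i.e. once `β₁²B² + β₂²A² < (β₁² + β₂² + 4)AB`; squaring, this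
reduces to `x₂² > 1`.
-/

open Real

theorem quadratic_root_pos_and_eq {a b c x : ℝ} (ha : 0 < a) (hc : 0 < c)
    (hx : x = (b + √(b ^ 2 + 4 * a * c)) / (2 * a)) : 0 < x ∧ a * x ^ 2 = b * x + c := by
  have hsq := sq_sqrt (by positivity : 0 ≤ b ^ 2 + 4 * a * c)
  set s := √(b ^ 2 + 4 * a * c)
  refine ⟨hx ▸ div_pos ?_ (by positivity), ?_⟩
  · linarith [lt_sqrt_of_sq_lt (x := -b) (y := b ^ 2 + 4 * a * c) (by nlinarith)]
  · subst hx
    field_simp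
    linear_combination hsq

theorem lt_of_quadratic_neg {a b c t : ℝ} (ha : 0 < a) (ht : a * t ^ 2 + b * t + c < 0) :
    (-b - √(b ^ 2 - 4 * a * c)) / (2 * a) < t := by
  have hsq : (-(2 * a * t + b)) ^ 2 < b ^ 2 - 4 * a * c := by nlinarith
  rw [div_lt_iff₀ (by positivity)]
  linarith [lt_sqrt_of_sq_lt hsq]

theorem quadratic_smaller_root_pos {a b c : ℝ} (ha : 0 < a) (hb : b < 0) (hc : 0 < c) :
    0 < (-b - √(b ^ 2 - 4 * a * c)) / (2 * a) := by
  have : √(b ^ 2 - 4 * a * c) < -b := (sqrt_lt' (by linarith)).2 (by nlinarith)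
  exact div_pos (by linarith) (by positivity)

section

variable {β₁ β₂ x A B : ℝ}

theorem one_lt_of_transition_eq (hβ₂ : 0 < β₂) (hx : 0 < x)
    (hQ : 2 * x ^ 2 = (β₂ ^ 2 - β₁ ^ 2) * x + (β₁ ^ 2 + β₂ ^ 2 + 2)) : 1 < x := by
  by_contra! h
  nlinarith [mul_nonneg (sq_nonneg β₁) (sub_nonneg.2 h), mul_pos (pow_pos hβ₂ 2) hx]

theorem mul_sub_one_lt_of_transition_eq (hβ₁ : 0 < β₁) (hβ₂ : 0 < β₂) (hx : 1 < x)
    (hQ : 2 * x ^ 2 = (β₂ ^ 2 - β₁ ^ 2) * x + (β₁ ^ 2 + β₂ ^ 2 + 2)) :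
    β₁ * (x - 1) < β₂ * (x + 1) := by
  by_contra! h
  nlinarith [mul_le_mul_of_nonneg_left h (add_pos hβ₁ hβ₂).le, mul_pos hβ₁ hβ₂]

theorem lt_of_transition_eq (hx : 0 < x)
    (hQ : 2 * x ^ 2 = (β₂ ^ 2 - β₁ ^ 2) * x + (β₁ ^ 2 + β₂ ^ 2 + 2)) (hA0 : 0 ≤ A)
    (hA : A ^ 2 = (1 + x) ^ 2 + β₁ ^ 2) (hB : B ^ 2 = (1 - x) ^ 2 + β₂ ^ 2) : B < A := by
  have hx' : x * (A ^ 2 - B ^ 2) = 2 * x ^ 2 + β₁ ^ 2 + β₂ ^ 2 + 2 := by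
    linear_combination x * hA - x * hB + hQ
  have : 0 < A ^ 2 - B ^ 2 := pos_of_mul_pos_right (hx' ▸ by positivity) hx.le
  exact lt_of_pow_lt_pow_left₀ 2 hA0 (by linarith)

theorem mul_lt_mul_of_transition_eq (hβ₁ : 0 < β₁) (hβ₂ : 0 < β₂) (hx : 1 < x)
    (hQ : 2 * x ^ 2 = (β₂ ^ 2 - β₁ ^ 2) * x + (β₁ ^ 2 + β₂ ^ 2 + 2)) (hA0 : 0 ≤ A)
    (hA : A ^ 2 = (1 + x) ^ 2 + β₁ ^ 2) (hB : B ^ 2 = (1 - x) ^ 2 + β₂ ^ 2) :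
    β₁ * B < β₂ * A := by
  have hlt := mul_sub_one_lt_of_transition_eq hβ₁ hβ₂ hx hQ
  have hsq : (β₁ * (x - 1)) ^ 2 < (β₂ * (x + 1)) ^ 2 :=
    pow_lt_pow_left₀ hlt (by nlinarith) two_ne_zero
  refine lt_of_pow_lt_pow_left₀ 2 (by positivity) ?_
  linear_combination hsq + β₁ ^ 2 * hB - β₂ ^ 2 * hA

theorem sq_add_sq_lt_of_transition_eq (hx : 1 < x)
    (hQ : 2 * x ^ 2 = (β₂ ^ 2 - β₁ ^ 2) * x + (β₁ ^ 2 + β₂ ^ 2 + 2)) (hA0 : 0 ≤ A) (hB0 : 0 ≤ B)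
    (hA : A ^ 2 = (1 + x) ^ 2 + β₁ ^ 2) (hB : B ^ 2 = (1 - x) ^ 2 + β₂ ^ 2) :
    β₁ ^ 2 * B ^ 2 + β₂ ^ 2 * A ^ 2 < (β₁ ^ 2 + β₂ ^ 2 + 4) * (A * B) := by
  set S := β₁ ^ 2 + β₂ ^ 2 + 4
  set u := x ^ 2 - 1
  have hsum : β₁ ^ 2 * B ^ 2 + β₂ ^ 2 * A ^ 2 = S * u + 2 * β₁ ^ 2 * β₂ ^ 2 := by
    linear_combination β₁ ^ 2 * hB + β₂ ^ 2 * hA - 2 * hQ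
  have hprod : (A * B) ^ 2 = u ^ 2 + S * u + β₁ ^ 2 * β₂ ^ 2 := by
    linear_combination B ^ 2 * hA + ((1 + x) ^ 2 + β₁ ^ 2) * hB - 2 * hQ
  have hu : 0 < u := by nlinarith
  have hdisc : 0 < S ^ 2 - 4 * β₁ ^ 2 * β₂ ^ 2 := by nlinarith [sq_nonneg (β₁ ^ 2 - β₂ ^ 2)]
  -- the difference of the two squares is `(S² − 4β₁²β₂²)(Su + β₁²β₂²)`
  have hsq : (S * u + 2 * β₁ ^ 2 * β₂ ^ 2) ^ 2 < (S * (A * B)) ^ 2 := by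
    have : 0 < (S ^ 2 - 4 * β₁ ^ 2 * β₂ ^ 2) * (S * u + β₁ ^ 2 * β₂ ^ 2) := by positivity
    linear_combination this - S ^ 2 * hprod
  rw [hsum]
  exact lt_of_pow_lt_pow_left₀ 2 (by positivity) hsq

end

theorem transition_quadratic_neg {β₁ β₂ A B m : ℝ} (hβ₁ : 0 < β₁) (hβ₂ : 0 < β₂) (hA : 0 < A)
    (h : β₁ ^ 2 * B ^ 2 + β₂ ^ 2 * A ^ 2 < m * (A * B)) :
    β₁ * β₂ * (β₁ / β₂ * B / A) ^ 2 + -m * (β₁ / β₂ * B / A) + β₁ * β₂ < 0 := by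
  have : β₁ * β₂ * (β₁ / β₂ * B / A) ^ 2 + -m * (β₁ / β₂ * B / A) + β₁ * β₂
      = β₁ / (β₂ * A ^ 2) * (β₁ ^ 2 * B ^ 2 + β₂ ^ 2 * A ^ 2 - m * (A * B)) := by
    field_simp
    ring
  rw [this]
  exact mul_neg_of_pos_of_neg (by positivity) (by linarith)

theorem div_mul_div_lt_min {β₁ β₂ A B : ℝ} (hβ₁ : 0 < β₁) (hβ₂ : 0 < β₂) (hA : 0 < A)
    (hβ : β₁ * B < β₂ * A) (hBA : B < A) : β₁ / β₂ * B / A < min 1 (β₁ / β₂) := by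
  refine lt_min ?_ ?_
  · rw [div_lt_one hA, div_mul_eq_mul_div, div_lt_iff₀ hβ₂]
    linarith
  · rw [mul_div_assoc]
    exact mul_lt_of_lt_one_right (by positivity) ((div_lt_one hA).2 hBA)

/-- **Ordering of the transition values:** `0 < Γ₁ < Γ₂ < min(1, β₁/β₂)`; in
particular `β₁ |z₂ − x₂| < β₂ |z₁ − x₂|` and `|z₂ − x₂| < |z₁ − x₂|`, where
`z₁ = −1 + β₁ i`, `z₂ = 1 + β₂ i`,
`x₂ = (β₂² − β₁²)/4 + (1/4)√((β₂² − β₁²)² + 8(β₁² + β₂² + 2))`,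
`Γ₁ = (1/(2β₁β₂))((β₁² + β₂² + 4) − √((β₁² + β₂² + 4)² − 4β₁²β₂²))` and
`Γ₂ = (β₁/β₂)·|z₂ − x₂|/|z₁ − x₂|`. -/
theorem gamma_ordering
    (β₁ β₂ : ℝ) (hβ₁ : 0 < β₁) (hβ₂ : 0 < β₂)
    (z₁ z₂ : ℂ) (hz₁ : z₁ = -1 + (β₁ : ℂ) * Complex.I)
    (hz₂ : z₂ = 1 + (β₂ : ℂ) * Complex.I)
    (x₀ x₂ : ℝ) (hx₀ : x₀ = (β₂ ^ 2 - β₁ ^ 2) / 4)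
    (hx₂ : x₂ = x₀ + (1 / 4) *
      Real.sqrt ((β₂ ^ 2 - β₁ ^ 2) ^ 2 + 8 * (β₁ ^ 2 + β₂ ^ 2 + 2)))
    (Γ₁ Γ₂ : ℝ)
    (hΓ₁ : Γ₁ = (1 / (2 * β₁ * β₂)) * ((β₁ ^ 2 + β₂ ^ 2 + 4)
      - Real.sqrt ((β₁ ^ 2 + β₂ ^ 2 + 4) ^ 2 - 4 * β₁ ^ 2 * β₂ ^ 2)))
    (hΓ₂ : Γ₂ = (β₁ / β₂) * ‖z₂ - (x₂ : ℂ)‖ / ‖z₁ - (x₂ : ℂ)‖) :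
    0 < Γ₁ ∧ Γ₁ < Γ₂ ∧ Γ₂ < min 1 (β₁ / β₂) ∧
    β₁ * ‖z₂ - (x₂ : ℂ)‖ < β₂ * ‖z₁ - (x₂ : ℂ)‖ ∧
    ‖z₂ - (x₂ : ℂ)‖ < ‖z₁ - (x₂ : ℂ)‖ := by
  obtain ⟨hx_pos, hQ⟩ := quadratic_root_pos_and_eq (b := β₂ ^ 2 - β₁ ^ 2) (x := x₂) two_pos
    (by positivity : 0 < β₁ ^ 2 + β₂ ^ 2 + 2) (by rw [hx₂, hx₀]; ring_nf)
  have hx_one := one_lt_of_transition_eq hβ₂ hx_pos hQ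
  set A := ‖z₁ - (x₂ : ℂ)‖
  set B := ‖z₂ - (x₂ : ℂ)‖
  have hA : A ^ 2 = (1 + x₂) ^ 2 + β₁ ^ 2 := by
    obtain ⟨hre, him⟩ : z₁.re = -1 ∧ z₁.im = β₁ := by simp [hz₁]
    rw [Complex.sq_norm_sub_ofReal, hre, him]
    ring
  have hB : B ^ 2 = (1 - x₂) ^ 2 + β₂ ^ 2 := by
    obtain ⟨hre, him⟩ : z₂.re = 1 ∧ z₂.im = β₂ := by simp [hz₂]
    rw [Complex.sq_norm_sub_ofReal, hre, him]
  have hA_pos : 0 < A :=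
    lt_of_pow_lt_pow_left₀ 2 (norm_nonneg _) (by rw [hA, zero_pow two_ne_zero]; positivity)
  have hBA := lt_of_transition_eq hx_pos hQ hA_pos.le hA hB
  have hβB := mul_lt_mul_of_transition_eq hβ₁ hβ₂ hx_one hQ hA_pos.le hA hB
  have hsum := sq_add_sq_lt_of_transition_eq hx_one hQ hA_pos.le (norm_nonneg _) hA hB
  have hΓ₁' : Γ₁ = (-(-(β₁ ^ 2 + β₂ ^ 2 + 4)) - √((-(β₁ ^ 2 + β₂ ^ 2 + 4)) ^ 2
      - 4 * (β₁ * β₂) * (β₁ * β₂))) / (2 * (β₁ * β₂)) := by rw [hΓ₁]; ring_nf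
  have hΓ₁_pos : 0 < Γ₁ := hΓ₁' ▸ quadratic_smaller_root_pos (by positivity)
    (by linarith [sq_nonneg β₁, sq_nonneg β₂]) (by positivity)
  have hΓ₁₂ : Γ₁ < Γ₂ := hΓ₁' ▸ hΓ₂ ▸
    lt_of_quadratic_neg (by positivity) (transition_quadratic_neg hβ₁ hβ₂ hA_pos hsum)
  exact ⟨hΓ₁_pos, hΓ₁₂, hΓ₂ ▸ div_mul_div_lt_min hβ₁ hβ₂ hA_pos hβB hBA, hβB, hBA⟩
end
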